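/- arXiv:math/0406401 — 6 statements merged into one kernel-verified Lean document; each statement's English description precedes it below -/
import Mathlib

section
/- For all integers r ≥ 1 and q ≥ 3, the constants κ_{r,q} := K(r,0,q)/r! satisfy |κ_{r,q} - (-1)^r ζ(q)(ζ(r+1) - 1)| ≤ (ζ(q-1) - ζ(q)) / 2^{r+1}. -/
open MeasureTheory

/-- Polylogarithm `Li n x = ∑_{k ≥ 1} x^k / k^n` (for an integer index `n`). -/
noncomputable def Li (n : ℤ) (x : ℝ) : ℝ := ∑' k : ℕ+, x ^ (k : ℕ) / ((k : ℕ) : ℝ) ^ n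

/-- Zeta value `ζ(n) = ∑_{k ≥ 1} 1 / k^n` (equals `0` at `n = 1` by divergence). -/
noncomputable def zetaR (n : ℕ) : ℝ := ∑' k : ℕ+, 1 / ((k : ℕ) : ℝ) ^ n

/-- The set of zeta values at integers `n ≥ 2`. -/
def zetaValues : Set ℝ := {x : ℝ | ∃ n : ℕ, 2 ≤ n ∧ x = zetaR n}

/-!
Expanding `Li_q(x)/(1-x) = ∑_{k,j ≥ 0} x^(k+j+1)/(k+1)^q` and integrating termwise with
`∫₀¹ (-log x)^r x^n dx = r!/(n+1)^(r+1)` gives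
`κ_{r,q} = (-1)^r ∑_k (k+1)^(-q) ∑_j (k+j+2)^(-(r+1))`, while
`ζ(q)(ζ(r+1) - 1) = ∑_k (k+1)^(-q) ∑_j (j+2)^(-(r+1))`. Their difference (up to the sign) is
`∑_k (k+1)^(-q) ∑_{i<k} (i+2)^(-(r+1))`: it is nonnegative, and since each inner term is at most
`2^(-(r+1))` it is at most `2^(-(r+1)) ∑_k k/(k+1)^q = 2^(-(r+1)) (ζ(q-1) - ζ(q))`.
-/

open Set Real
open scoped Nat

noncomputable def zetaTerm (s n : ℕ) : ℝ := 1 / ((n : ℝ) + 1) ^ s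

section ZetaTerm

variable {s : ℕ}

lemma zetaTerm_nonneg (s n : ℕ) : 0 ≤ zetaTerm s n := by
  unfold zetaTerm; positivity

lemma zetaTerm_antitone (s : ℕ) : Antitone (zetaTerm s) := fun m n hmn => by
  unfold zetaTerm; gcongr

lemma summable_zetaTerm (hs : 2 ≤ s) : Summable (zetaTerm s) := by
  unfold zetaTerm
  have := (summable_nat_add_iff 1).mpr (Real.summable_one_div_nat_pow.mpr (by omega : 1 < s))
  simpa using this

lemma zetaR_eq_tsum_zetaTerm (s : ℕ) : zetaR s = ∑' n, zetaTerm s n := by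
  rw [zetaR, tsum_pnat_eq_tsum_succ (f := fun n => 1 / (n : ℝ) ^ s)]
  simp [zetaTerm]

lemma zetaR_sub_one_eq_tsum_zetaTerm_succ (hs : 2 ≤ s) :
    zetaR s - 1 = ∑' n, zetaTerm s (n + 1) := by
  rw [zetaR_eq_tsum_zetaTerm, (summable_zetaTerm hs).tsum_eq_zero_add]
  simp [zetaTerm]

lemma natCast_mul_zetaTerm_succ (s n : ℕ) :
    n * zetaTerm (s + 1) n = zetaTerm s n - zetaTerm (s + 1) n := by
  simp only [zetaTerm, pow_succ]
  field_simp
  ring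

lemma summable_natCast_mul_zetaTerm (hs : 3 ≤ s) : Summable fun n => n * zetaTerm s n := by
  obtain ⟨m, rfl⟩ : ∃ m, s = m + 1 := ⟨s - 1, by omega⟩
  simpa only [natCast_mul_zetaTerm_succ] using
    (summable_zetaTerm (by omega)).sub (summable_zetaTerm (by omega))

lemma zetaR_pred_sub_zetaR (hs : 3 ≤ s) :
    zetaR (s - 1) - zetaR s = ∑' n, n * zetaTerm s n := by
  obtain ⟨m, rfl⟩ : ∃ m, s = m + 1 := ⟨s - 1, by omega⟩
  rw [zetaR_eq_tsum_zetaTerm, zetaR_eq_tsum_zetaTerm, Nat.add_sub_cancel,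
    ← (summable_zetaTerm (by omega)).tsum_sub (summable_zetaTerm (by omega))]
  simp only [natCast_mul_zetaTerm_succ]

lemma Li_eq_tsum_zetaTerm (s : ℕ) (x : ℝ) : Li s x = ∑' n, x ^ (n + 1) * zetaTerm s n := by
  rw [Li, tsum_pnat_eq_tsum_succ (f := fun n => x ^ n / (n : ℝ) ^ (s : ℤ))]
  simp [zetaTerm, div_eq_mul_inv]

end ZetaTerm

section ShiftedTails

open Finset

variable {a b : ℕ → ℝ}

theorem tsum_mul_tsum_sub_tsum_mul_tsum_nat_add (ha : Summable a) (hb : Summable b)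
    (hab : Summable fun k => a k * ∑ i ∈ range k, b i) :
    (∑' k, a k) * (∑' j, b j) - ∑' k, a k * ∑' j, b (k + j)
      = ∑' k, a k * ∑ i ∈ range k, b i := by
  have tail (k : ℕ) : ∑' j, b (k + j) = ∑' j, b j - ∑ i ∈ range k, b i := by
    rw [← hb.sum_add_tsum_nat_add k]
    simp [add_comm]
  simp_rw [tail, mul_sub]
  rw [(ha.mul_right _).tsum_sub hab, tsum_mul_right]
  ring

variable {B : ℝ}

lemma mul_sum_range_le (ha0 : ∀ k, 0 ≤ a k) (hbB : ∀ i, b i ≤ B) (k : ℕ) :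
    a k * ∑ i ∈ range k, b i ≤ B * (k * a k) := by
  have := sum_le_card_nsmul (range k) b B fun i _ => hbB i
  rw [card_range, nsmul_eq_mul] at this
  nlinarith [ha0 k]

lemma summable_mul_sum_range (ha0 : ∀ k, 0 ≤ a k) (hbB : ∀ i, b i ≤ B) (hb0 : ∀ i, 0 ≤ b i)
    (hka : Summable fun k => k * a k) :
    Summable fun k => a k * ∑ i ∈ range k, b i :=
  (hka.mul_left B).of_nonneg_of_le
    (fun k => mul_nonneg (ha0 k) (sum_nonneg fun i _ => hb0 i)) (mul_sum_range_le ha0 hbB)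

lemma tsum_mul_sum_range_le (ha0 : ∀ k, 0 ≤ a k) (hbB : ∀ i, b i ≤ B) (hb0 : ∀ i, 0 ≤ b i)
    (hka : Summable fun k => k * a k) :
    ∑' k, a k * ∑ i ∈ range k, b i ≤ B * ∑' k, k * a k := by
  rw [← tsum_mul_left]
  exact (summable_mul_sum_range ha0 hbB hb0 hka).tsum_le_tsum (mul_sum_range_le ha0 hbB)
    (hka.mul_left B)

end ShiftedTails

section LogMoments

lemma image_exp_neg_Ioi : (fun t : ℝ => exp (-t)) '' Ioi 0 = Ioo 0 1 := by
  ext x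
  simp only [mem_image, mem_Ioi, mem_Ioo]
  constructor
  · rintro ⟨t, ht, rfl⟩
    exact ⟨exp_pos _, by rw [exp_lt_one_iff]; linarith⟩
  · rintro ⟨hx0, hx1⟩
    exact ⟨-log x, by simpa using log_neg hx0 hx1, by rw [neg_neg, exp_log hx0]⟩

lemma hasDerivWithinAt_exp_neg (s : Set ℝ) (t : ℝ) :
    HasDerivWithinAt (fun t => exp (-t)) (-exp (-t)) s t := by
  simpa using ((hasDerivAt_neg t).exp).hasDerivWithinAt

lemma integrableOn_Ioo_zero_one_iff_comp_exp_neg (g : ℝ → ℝ) :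
    IntegrableOn g (Ioo 0 1) ↔ IntegrableOn (fun t => exp (-t) * g (exp (-t))) (Ioi 0) := by
  rw [← image_exp_neg_Ioi, integrableOn_image_iff_integrableOn_abs_deriv_smul measurableSet_Ioi
    (fun t _ => hasDerivWithinAt_exp_neg _ t) (exp_injective.comp neg_injective).injOn]
  simp [abs_of_pos (exp_pos _)]

lemma integral_Ioo_zero_one_eq_integral_comp_exp_neg (g : ℝ → ℝ) :
    ∫ x in Ioo 0 1, g x = ∫ t in Ioi 0, exp (-t) * g (exp (-t)) := by
  rw [← image_exp_neg_Ioi, integral_image_eq_integral_abs_deriv_smul measurableSet_Ioi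
    (fun t _ => hasDerivWithinAt_exp_neg _ t) (exp_injective.comp neg_injective).injOn]
  simp [abs_of_pos (exp_pos _)]

lemma exp_neg_mul_neg_log_pow_mul_pow (r n : ℕ) (t : ℝ) :
    exp (-t) * ((-log (exp (-t))) ^ r * exp (-t) ^ n) = t ^ r * exp (-((n + 1) * t)) := by
  rw [log_exp, neg_neg, ← exp_nat_mul, mul_left_comm, ← exp_add]
  ring_nf

lemma integrableOn_neg_log_pow_mul_pow (r n : ℕ) :
    IntegrableOn (fun x => (-log x) ^ r * x ^ n) (Ioo 0 1) := by
  rw [integrableOn_Ioo_zero_one_iff_comp_exp_neg]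
  simp_rw [exp_neg_mul_neg_log_pow_mul_pow]
  have h := integrableOn_rpow_mul_exp_neg_mul_rpow (p := 1) (s := (r : ℝ)) (b := (n : ℝ) + 1)
    (neg_one_lt_zero.trans_le r.cast_nonneg) zero_lt_one (by positivity)
  refine h.congr_fun (fun t _ => ?_) measurableSet_Ioi
  simp only [rpow_one, rpow_natCast, neg_mul]

lemma integral_neg_log_pow_mul_pow (r n : ℕ) :
    ∫ x in Ioo 0 1, (-log x) ^ r * x ^ n = r ! / ((n : ℝ) + 1) ^ (r + 1) := by
  rw [integral_Ioo_zero_one_eq_integral_comp_exp_neg]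
  simp_rw [exp_neg_mul_neg_log_pow_mul_pow]
  have h := integral_rpow_mul_exp_neg_mul_Ioi (a := (r : ℝ) + 1) (r := (n : ℝ) + 1)
    (by positivity) (by positivity)
  simp only [add_sub_cancel_right, rpow_natCast] at h
  rw [h, Gamma_nat_eq_factorial, ← Nat.cast_add_one r, rpow_natCast, div_pow, one_pow]
  ring

end LogMoments

section DoubleSeries

variable {r q : ℕ}

lemma tsum_prod_pow_mul_zetaTerm {x : ℝ} (hx : x ∈ Ioo 0 1) :
    ∑' p : ℕ × ℕ, x ^ (p.1 + p.2 + 1) * zetaTerm q p.1 = Li q x / (1 - x) := by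
  have hgeo := summable_geometric_of_lt_one hx.1.le hx.2
  have hLi : Summable fun k => x ^ (k + 1) * zetaTerm q k := by
    refine ((summable_nat_add_iff 1).mpr hgeo).of_nonneg_of_le
      (fun k => mul_nonneg (pow_nonneg hx.1.le _) (zetaTerm_nonneg _ _)) (fun k => ?_)
    refine mul_le_of_le_one_right (pow_nonneg hx.1.le _) ?_
    simpa [zetaTerm] using zetaTerm_antitone q k.zero_le
  rw [Li_eq_tsum_zetaTerm, div_eq_mul_inv, ← tsum_geometric_of_lt_one hx.1.le hx.2,
    hLi.tsum_mul_tsum hgeo (hLi.mul_of_nonneg hgeo (fun k => mul_nonneg (pow_nonneg hx.1.le _)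
      (zetaTerm_nonneg _ _)) fun j => pow_nonneg hx.1.le _)]
  congr with p
  ring

lemma integral_neg_log_pow_mul_pow_mul_zetaTerm (p : ℕ × ℕ) :
    ∫ x in Ioo 0 1, (-log x) ^ r * x ^ (p.1 + p.2 + 1) * zetaTerm q p.1
      = r ! * (zetaTerm q p.1 * zetaTerm (r + 1) (p.1 + p.2 + 1)) := by
  rw [integral_mul_const, integral_neg_log_pow_mul_pow]
  simp only [zetaTerm]
  push_cast
  ring

lemma summable_zetaTerm_mul_zetaTerm_add (hr : 1 ≤ r) (hq : 2 ≤ q) :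
    Summable fun p : ℕ × ℕ => zetaTerm q p.1 * zetaTerm (r + 1) (p.1 + p.2 + 1) := by
  have hb : Summable fun j => zetaTerm (r + 1) (j + 1) :=
    (summable_nat_add_iff 1).mpr (summable_zetaTerm (by omega))
  refine ((summable_zetaTerm hq).mul_of_nonneg hb (zetaTerm_nonneg _) fun j => zetaTerm_nonneg _ _
    ).of_nonneg_of_le (fun p => mul_nonneg (zetaTerm_nonneg _ _) (zetaTerm_nonneg _ _))
    fun p => ?_
  exact mul_le_mul_of_nonneg_left (zetaTerm_antitone _ (by omega)) (zetaTerm_nonneg _ _)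

theorem integral_neg_log_pow_mul_Li_div_one_sub (hr : 1 ≤ r) (hq : 2 ≤ q) :
    ∫ x in Ioo 0 1, (-log x) ^ r * Li q x / (1 - x)
      = r ! * ∑' k, zetaTerm q k * ∑' j, zetaTerm (r + 1) (k + j + 1) := by
  set F : ℕ × ℕ → ℝ → ℝ := fun p x =>
    (-log x) ^ r * x ^ (p.1 + p.2 + 1) * zetaTerm q p.1
  have hF_nonneg (p : ℕ × ℕ) : ∀ x ∈ Ioo (0 : ℝ) 1, 0 ≤ F p x := fun x hx =>
    mul_nonneg (mul_nonneg (pow_nonneg (neg_nonneg.mpr (log_nonpos hx.1.le hx.2.le)) _)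
      (pow_nonneg hx.1.le _)) (zetaTerm_nonneg _ _)
  have hF_int (p : ℕ × ℕ) : IntegrableOn (F p) (Ioo 0 1) :=
    (integrableOn_neg_log_pow_mul_pow r _).mul_const _
  have hF_norm (p : ℕ × ℕ) : ∫ x in Ioo 0 1, ‖F p x‖ = ∫ x in Ioo 0 1, F p x :=
    setIntegral_congr_fun measurableSet_Ioo fun x hx => norm_of_nonneg (hF_nonneg p x hx)
  have hsum := summable_zetaTerm_mul_zetaTerm_add hr hq
  calc ∫ x in Ioo 0 1, (-log x) ^ r * Li q x / (1 - x)
      = ∫ x in Ioo 0 1, ∑' p, F p x := by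
        refine setIntegral_congr_fun measurableSet_Ioo fun x hx => ?_
        rw [mul_div_assoc, ← tsum_prod_pow_mul_zetaTerm hx, ← tsum_mul_left]
        simp only [F, mul_assoc]
    _ = ∑' p, ∫ x in Ioo 0 1, F p x := by
        refine (integral_tsum_of_summable_integral_norm hF_int ?_).symm
        simp only [hF_norm, F, integral_neg_log_pow_mul_pow_mul_zetaTerm]
        exact hsum.mul_left _
    _ = r ! * ∑' k, zetaTerm q k * ∑' j, zetaTerm (r + 1) (k + j + 1) := by
        simp only [F, integral_neg_log_pow_mul_pow_mul_zetaTerm, tsum_mul_left, hsum.tsum_prod]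

end DoubleSeries

lemma intervalIntegral_log_pow_mul (r : ℕ) (f : ℝ → ℝ) :
    ∫ x in (0 : ℝ)..1, log x ^ r * f x = (-1) ^ r * ∫ x in Ioo 0 1, (-log x) ^ r * f x := by
  rw [intervalIntegral.integral_of_le zero_le_one, integral_Ioc_eq_integral_Ioo,
    ← integral_const_mul]
  congr with x
  rw [neg_pow (log x), ← mul_assoc, ← mul_assoc, ← mul_pow]
  norm_num

/-- For integers `r ≥ 1` and `q ≥ 3`, the constants
`κ_{r,q} = (∫₀¹ log^r(x) Li_q(x)/(1-x) dx) / r!` satisfy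
`|κ_{r,q} - (-1)^r ζ(q)(ζ(r+1) - 1)| ≤ (ζ(q-1) - ζ(q)) / 2^(r+1)`. -/
theorem stmt3 (r q : ℕ) (hr : 1 ≤ r) (hq : 3 ≤ q) :
    |(∫ x in (0:ℝ)..1, Real.log x ^ r * Li q x / (1 - x)) / (r.factorial : ℝ)
        - (-1) ^ r * zetaR q * (zetaR (r + 1) - 1)|
      ≤ (zetaR (q - 1) - zetaR q) / 2 ^ (r + 1) := by
  set a := zetaTerm q
  set b : ℕ → ℝ := fun j => zetaTerm (r + 1) (j + 1)
  have ha : Summable a := summable_zetaTerm (by omega)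
  have hb : Summable b := (summable_nat_add_iff 1).mpr (summable_zetaTerm (by omega))
  have hb_le (j : ℕ) : b j ≤ 1 / 2 ^ (r + 1) := by
    simpa [b, zetaTerm, one_add_one_eq_two] using zetaTerm_antitone (r + 1) (Nat.le_add_left 1 j)
  have hab := summable_mul_sum_range (zetaTerm_nonneg q) hb_le (fun j => zetaTerm_nonneg _ _)
    (summable_natCast_mul_zetaTerm hq)
  have hκ : (∫ x in (0:ℝ)..1, log x ^ r * Li q x / (1 - x)) / r !
      = (-1) ^ r * ∑' k, a k * ∑' j, b (k + j) := by
    simp_rw [mul_div_assoc, intervalIntegral_log_pow_mul, ← mul_div_assoc,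
      integral_neg_log_pow_mul_Li_div_one_sub hr (by omega : 2 ≤ q)]
    field_simp
    rfl
  have hc : zetaR q * (zetaR (r + 1) - 1) = (∑' k, a k) * ∑' j, b j := by
    rw [zetaR_eq_tsum_zetaTerm, zetaR_sub_one_eq_tsum_zetaTerm_succ (by omega)]
  rw [hκ, mul_assoc, hc, ← mul_sub, abs_mul, abs_neg_one_pow, one_mul, abs_sub_comm,
    tsum_mul_tsum_sub_tsum_mul_tsum_nat_add ha hb hab, abs_of_nonneg (tsum_nonneg fun k =>
      mul_nonneg (zetaTerm_nonneg _ _) (Finset.sum_nonneg fun i _ => zetaTerm_nonneg _ _)),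
    zetaR_pred_sub_zetaR hq, div_eq_mul_inv, mul_comm, ← one_div]
  exact tsum_mul_sum_range_le (zetaTerm_nonneg q) hb_le (fun j => zetaTerm_nonneg _ _)
    (summable_natCast_mul_zetaTerm hq)
end

section
/- For all integers q, r ≥ 2, the linear Euler sum satisfies S_{r,q} = ζ(r)ζ(q) - ((-1)^{r-1}/(r-1)!) ∫₀¹ log^{r-1}(x) Li_q(x) / (1-x) dx. -/
open MeasureTheory

/-!
Both sides are governed by the double series `D = ∑_{1 ≤ a < b} 1 / (a^q b^r)`. Summing the
tails `ζ(r) - H_a^{(r)} = ∑_{b > a} b^{-r}` against `a^{-q}` gives `ζ(r) ζ(q) - S_{r,q} = D`.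
On the other side `Li_q(x) / (1 - x) = ∑_{a ≥ 1, j ≥ 0} x^{a+j} / a^q`, and
`∫₀¹ x^m log^p x dx = (-1)^p p! / (m+1)^{p+1}` (integration by parts in `p`), so integrating term
by term, which is legitimate because `log^p x` has constant sign on `(0, 1)`, gives
`∫₀¹ log^{r-1} x · Li_q(x) / (1 - x) dx = (-1)^{r-1} (r-1)! D`.
-/

open Filter Set Topology

theorem tendsto_pow_mul_log_pow_nhdsGT_zero {m : ℕ} (hm : m ≠ 0) (p : ℕ) :
    Tendsto (fun x : ℝ => x ^ m * Real.log x ^ p) (𝓝[>] 0) (𝓝 0) := by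
  set s : ℝ := m / (p + 1)
  have hs : 0 < s := by positivity
  -- `x ^ m * log x ^ p = (log x * x ^ s) ^ p * x ^ s` with both factors tending to `0`
  have hlim : Tendsto (fun x : ℝ => (Real.log x * x ^ s) ^ p * x ^ s) (𝓝[>] 0) (𝓝 0) := by
    have hrpow : Tendsto (fun x : ℝ => x ^ s) (𝓝[>] 0) (𝓝 0) := by
      simpa [Real.zero_rpow hs.ne'] using
        (Real.continuousAt_rpow_const 0 s (Or.inr hs.le)).tendsto.mono_left nhdsWithin_le_nhds
    simpa using ((tendsto_log_mul_rpow_nhdsGT_zero hs).pow p).mul hrpow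
  refine hlim.congr' (eventually_nhdsWithin_of_forall fun x (hx : 0 < x) => ?_)
  have hsp : s * p + s = m := by simp only [s]; field_simp
  rw [mul_pow, mul_assoc, ← Real.rpow_natCast (x ^ s), ← Real.rpow_mul hx.le,
    ← Real.rpow_add hx, hsp, Real.rpow_natCast, mul_comm]

theorem continuousOn_pow_mul_log_pow {m : ℕ} (hm : m ≠ 0) (p : ℕ) :
    ContinuousOn (fun x : ℝ => x ^ m * Real.log x ^ p) (Icc 0 1) := by
  intro x hx
  rcases hx.1.eq_or_lt with rfl | hx0
  · have h0 : ContinuousWithinAt (fun x : ℝ => x ^ m * Real.log x ^ p) (Ioi 0) 0 := by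
      simpa [ContinuousWithinAt, zero_pow hm] using tendsto_pow_mul_log_pow_nhdsGT_zero hm p
    refine (continuousWithinAt_insert_self.mpr h0).mono fun y hy => ?_
    rcases hy.1.eq_or_lt with rfl | hy0
    exacts [mem_insert _ _, mem_insert_of_mem _ hy0]
  · exact ((continuous_pow m).continuousAt.mul
      ((Real.continuousAt_log hx0.ne').pow p)).continuousWithinAt

theorem intervalIntegrable_pow_mul_log_pow {m : ℕ} (hm : m ≠ 0) (p : ℕ) :
    IntervalIntegrable (fun x : ℝ => x ^ m * Real.log x ^ p) volume 0 1 :=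
  (continuousOn_pow_mul_log_pow hm p).intervalIntegrable_of_Icc zero_le_one

theorem integral_pow_mul_log_pow {m : ℕ} (hm : m ≠ 0) (p : ℕ) :
    ∫ x in (0 : ℝ)..1, x ^ m * Real.log x ^ p = (-1) ^ p * p.factorial / ((m : ℝ) + 1) ^ (p + 1) := by
  induction p with
  | zero => simp [integral_pow]
  | succ p ih =>
    set J : ℕ → ℝ := fun p => ∫ x in (0 : ℝ)..1, x ^ m * Real.log x ^ p
    have hderiv : ∀ x ∈ Ioo (0 : ℝ) 1, HasDerivAt (fun x : ℝ => x ^ (m + 1) * Real.log x ^ (p + 1))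
        ((m + 1) * (x ^ m * Real.log x ^ (p + 1)) + (p + 1) * (x ^ m * Real.log x ^ p)) x := by
      intro x hx
      have hpow : HasDerivAt (fun x : ℝ => x ^ (m + 1)) ((m + 1) * x ^ m) x := by
        simpa using hasDerivAt_pow (m + 1) x
      have hlog : HasDerivAt (fun x : ℝ => Real.log x ^ (p + 1))
          ((p + 1) * Real.log x ^ p * x⁻¹) x := by
        simpa using (Real.hasDerivAt_log hx.1.ne').fun_pow (p + 1)
      refine (hpow.fun_mul hlog).congr_deriv ?_
      field_simp [hx.1.ne']
      ring
    -- integrating the derivative of `x ^ (m + 1) * log x ^ (p + 1)`, which vanishes at `0` and `1`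
    have hrec : (m + 1) * J (p + 1) + (p + 1) * J p = 0 := by
      have hint := intervalIntegrable_pow_mul_log_pow hm
      have := intervalIntegral.integral_eq_sub_of_hasDerivAt_of_le zero_le_one
        (continuousOn_pow_mul_log_pow m.succ_ne_zero (p + 1)) hderiv
        (((hint _).const_mul _).add ((hint _).const_mul _))
      simpa [J, intervalIntegral.integral_add ((hint _).const_mul _) ((hint _).const_mul _)]
        using this
    simp only [J, ih] at hrec
    field_simp at hrec
    rw [Nat.factorial_succ, eq_div_iff (by positivity)]
    push_cast
    linear_combination hrec

theorem zetaR_eq_tsum_nat (r : ℕ) : zetaR r = ∑' n : ℕ, 1 / ((n : ℝ) + 1) ^ r :=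
  (tsum_pnat_eq_tsum_succ (f := fun n : ℕ => 1 / (n : ℝ) ^ r)).trans (by simp)

theorem summable_one_div_nat_add_one_pow {r : ℕ} (hr : 1 < r) :
    Summable fun n : ℕ => 1 / ((n : ℝ) + 1) ^ r := by
  simpa using (summable_nat_add_iff 1).mpr (Real.summable_one_div_nat_pow.mpr hr)

theorem sum_Icc_one_div_pow_eq_sum_range (r n : ℕ) :
    ∑ k ∈ Finset.Icc 1 n, (1 : ℝ) / (k : ℝ) ^ r = ∑ k ∈ Finset.range n, 1 / ((k : ℝ) + 1) ^ r := by
  rw [← Finset.Ico_add_one_right_eq_Icc, Finset.sum_Ico_eq_sum_range, Nat.add_sub_cancel]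
  simp [add_comm]

theorem zetaR_sub_sum_Icc_one_div_pow {r : ℕ} (hr : 1 < r) (n : ℕ) :
    zetaR r - ∑ k ∈ Finset.Icc 1 n, (1 : ℝ) / (k : ℝ) ^ r
      = ∑' j : ℕ, 1 / ((j : ℝ) + n + 1) ^ r := by
  rw [zetaR_eq_tsum_nat, sum_Icc_one_div_pow_eq_sum_range,
    ← (summable_one_div_nat_add_one_pow hr).sum_add_tsum_nat_add n, add_sub_cancel_left]
  push_cast
  rfl

/-- The pair `(n, j)` stands for `(a, b) = (n + 1, n + j + 2)`, running over all `1 ≤ a < b`. -/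
noncomputable def tailTerm (r q : ℕ) (z : ℕ × ℕ) : ℝ :=
  1 / (((z.1 : ℝ) + 1) ^ q * ((z.1 : ℝ) + z.2 + 2) ^ r)

theorem summable_tailTerm {r q : ℕ} (hr : 1 < r) (hq : 1 < q) : Summable (tailTerm r q) := by
  refine .of_nonneg_of_le (fun z => by unfold tailTerm; positivity) (fun z => ?_)
    ((summable_one_div_nat_add_one_pow hq).mul_of_nonneg (summable_one_div_nat_add_one_pow hr)
      (fun n => by positivity) (fun j => by positivity))
  rw [tailTerm, one_div_mul_one_div]
  gcongr <;> linarith [(z.1.cast_nonneg : (0 : ℝ) ≤ z.1)]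

theorem tsum_tailTerm_fibre {r : ℕ} (hr : 1 < r) (q n : ℕ) :
    ∑' j, tailTerm r q (n, j)
      = (zetaR r - ∑ k ∈ Finset.Icc 1 (n + 1), (1 : ℝ) / (k : ℝ) ^ r) / ((n : ℝ) + 1) ^ q := by
  rw [zetaR_sub_sum_Icc_one_div_pow hr, div_eq_mul_inv, ← tsum_mul_right]
  refine tsum_congr fun j => ?_
  simp only [tailTerm]
  push_cast
  field_simp
  ring

theorem zetaR_mul_zetaR_sub_tsum_eq_tsum_tailTerm {r q : ℕ} (hr : 1 < r) (hq : 1 < q) :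
    zetaR r * zetaR q
        - ∑' n : ℕ+, (∑ k ∈ Finset.Icc 1 (n : ℕ), (1 : ℝ) / (k : ℝ) ^ r) / ((n : ℕ) : ℝ) ^ q
      = ∑' z, tailTerm r q z := by
  have hsplit : ∀ n : ℕ,
      (∑ k ∈ Finset.Icc 1 (n + 1), (1 : ℝ) / (k : ℝ) ^ r) / ((n + 1 : ℕ) : ℝ) ^ q
        = zetaR r * (1 / ((n : ℝ) + 1) ^ q) - ∑' j, tailTerm r q (n, j) := by
    intro n
    rw [tsum_tailTerm_fibre hr]
    push_cast
    ring
  have hsum := summable_tailTerm hr hq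
  rw [tsum_pnat_eq_tsum_succ (f := fun n =>
      (∑ k ∈ Finset.Icc 1 n, (1 : ℝ) / (k : ℝ) ^ r) / (n : ℝ) ^ q),
    tsum_congr hsplit, ((summable_one_div_nat_add_one_pow hq).mul_left _).tsum_sub hsum.prod,
    tsum_mul_left, ← zetaR_eq_tsum_nat, hsum.tsum_prod, sub_sub_cancel]

theorem Li_natCast_eq_tsum (q : ℕ) (x : ℝ) :
    Li q x = ∑' n : ℕ, x ^ (n + 1) / ((n : ℝ) + 1) ^ q :=
  (tsum_pnat_eq_tsum_succ (f := fun n : ℕ => x ^ n / (n : ℝ) ^ (q : ℤ))).trans (by simp)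

theorem Li_div_one_sub_eq_tsum (q : ℕ) {x : ℝ} (hx₀ : 0 ≤ x) (hx₁ : x < 1) :
    Li q x / (1 - x) = ∑' z : ℕ × ℕ, x ^ (z.1 + 1 + z.2) / ((z.1 : ℝ) + 1) ^ q := by
  have hgeom : Summable fun j : ℕ => x ^ j := summable_geometric_of_lt_one hx₀ hx₁
  have hLi : Summable fun n : ℕ => x ^ (n + 1) / ((n : ℝ) + 1) ^ q :=
    .of_nonneg_of_le (fun n => by positivity)
      (fun n => div_le_self (by positivity) (one_le_pow₀ (by linarith [n.cast_nonneg (α := ℝ)])))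
      ((summable_nat_add_iff 1).mpr hgeom)
  rw [Li_natCast_eq_tsum, div_eq_mul_inv, ← tsum_geometric_of_lt_one hx₀ hx₁,
    hLi.tsum_mul_tsum hgeom
      (hLi.mul_of_nonneg hgeom (fun n => by positivity) (fun j => by positivity))]
  refine tsum_congr fun z => ?_
  ring

theorem log_pow_mul_Li_div_one_sub_eq_tsum {p : ℕ} (hp : p ≠ 0) (q : ℕ) {x : ℝ}
    (hx : x ∈ Ioc 0 1) :
    Real.log x ^ p * Li q x / (1 - x)
      = ∑' z : ℕ × ℕ, x ^ (z.1 + 1 + z.2) * Real.log x ^ p / ((z.1 : ℝ) + 1) ^ q := by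
  rcases hx.2.eq_or_lt with rfl | hx₁
  · simp [hp]
  · rw [mul_div_assoc, Li_div_one_sub_eq_tsum q hx.1.le hx₁, ← tsum_mul_left]
    refine tsum_congr fun z => ?_
    ring

theorem integral_pow_mul_log_pow_div {p : ℕ} (q : ℕ) (z : ℕ × ℕ) :
    ∫ x in Ioc (0 : ℝ) 1, x ^ (z.1 + 1 + z.2) * Real.log x ^ p / ((z.1 : ℝ) + 1) ^ q
      = (-1) ^ p * p.factorial * tailTerm (p + 1) q z := by
  rw [integral_div, ← intervalIntegral.integral_of_le zero_le_one,
    integral_pow_mul_log_pow (by omega), tailTerm]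
  push_cast
  field_simp
  ring

theorem integral_norm_pow_mul_log_pow_div {p : ℕ} (q : ℕ) (z : ℕ × ℕ) :
    ∫ x in Ioc (0 : ℝ) 1, ‖x ^ (z.1 + 1 + z.2) * Real.log x ^ p / ((z.1 : ℝ) + 1) ^ q‖
      = p.factorial * tailTerm (p + 1) q z := by
  have hsign : ∀ x ∈ Ioc (0 : ℝ) 1,
      ‖x ^ (z.1 + 1 + z.2) * Real.log x ^ p / ((z.1 : ℝ) + 1) ^ q‖
        = (-1) ^ p * (x ^ (z.1 + 1 + z.2) * Real.log x ^ p / ((z.1 : ℝ) + 1) ^ q) := by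
    intro x hx
    rw [Real.norm_eq_abs, abs_div, abs_mul, abs_pow, abs_pow, abs_of_pos hx.1,
      abs_of_nonpos (Real.log_nonpos hx.1.le hx.2), abs_of_pos (by positivity)]
    ring
  rw [setIntegral_congr_fun measurableSet_Ioc hsign, integral_const_mul,
    integral_pow_mul_log_pow_div, ← mul_assoc, ← mul_assoc, ← pow_add, Even.neg_one_pow ⟨p, rfl⟩,
    one_mul]

theorem integral_log_pow_mul_Li_div_one_sub {p q : ℕ} (hp : p ≠ 0) (hq : 1 < q) :
    ∫ x in (0 : ℝ)..1, Real.log x ^ p * Li q x / (1 - x)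
      = (-1) ^ p * p.factorial * ∑' z, tailTerm (p + 1) q z := by
  have hint : ∀ z : ℕ × ℕ, IntegrableOn
      (fun x : ℝ => x ^ (z.1 + 1 + z.2) * Real.log x ^ p / ((z.1 : ℝ) + 1) ^ q) (Ioc 0 1) :=
    fun z => ((intervalIntegrable_pow_mul_log_pow (by omega) p).1.div_const _)
  have hnorm : Summable fun z : ℕ × ℕ => ∫ x in Ioc (0 : ℝ) 1,
      ‖x ^ (z.1 + 1 + z.2) * Real.log x ^ p / ((z.1 : ℝ) + 1) ^ q‖ :=
    ((summable_tailTerm (by omega) hq).mul_left _).congr fun z =>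
      (integral_norm_pow_mul_log_pow_div q z).symm
  rw [intervalIntegral.integral_of_le zero_le_one,
    setIntegral_congr_fun measurableSet_Ioc fun x hx => log_pow_mul_Li_div_one_sub_eq_tsum hp q hx,
    ← integral_tsum_of_summable_integral_norm hint hnorm, ← tsum_mul_left]
  exact tsum_congr fun z => integral_pow_mul_log_pow_div q z

/-- For all integers `q, r ≥ 2`, the linear Euler sum satisfies
`S_{r,q} = ζ(r)ζ(q) - ((-1)^(r-1)/(r-1)!) ∫₀¹ log^(r-1)(x) Li_q(x) / (1-x) dx`. -/
theorem stmt4 (r q : ℕ) (hr : 2 ≤ r) (hq : 2 ≤ q) :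
    ∑' n : ℕ+, (∑ k ∈ Finset.Icc 1 (n : ℕ), (1 : ℝ) / (k : ℝ) ^ r) / ((n : ℕ) : ℝ) ^ q
      = zetaR r * zetaR q
        - ((-1) ^ (r - 1) / ((r - 1).factorial : ℝ))
            * ∫ x in (0:ℝ)..1, Real.log x ^ (r - 1) * Li q x / (1 - x) := by
  obtain ⟨p, rfl⟩ : ∃ p, r = p + 1 := ⟨r - 1, by omega⟩
  have hp : p ≠ 0 := by omega
  rw [Nat.add_sub_cancel, integral_log_pow_mul_Li_div_one_sub hp hq,
    ← zetaR_mul_zetaR_sub_tsum_eq_tsum_tailTerm hr hq]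
  field_simp
  rw [pow_right_comm, neg_one_sq, one_pow, one_mul, sub_sub_cancel]
end

section
/- For all integers p ≥ 1 and q ≥ 2, the nonlinear Euler sum S_{1^p,q} = Σ_{n=1}^∞ H_n^p / n^q equals (-1)^p times the integral over the open unit cube Q_p = (0,1)^p of Li_{q-p}(x₁⋯x_p) · ∏_{j=1}^p log(1-x_j) divided by x₁⋯x_p, with respect to Lebesgue measure on ℝ^p. -/
/-!
Expanding `Li_{q-p}(t)/t = ∑_{n ≥ 0} t^n/(n+1)^{q-p}` at `t = x₁⋯x_p` turns the integrand
into `(-1)^p ∑_n (n+1)^{p-q} ∏_j x_j^n (-log(1 - x_j))`. Each summand factorises over the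
coordinates, and `∫₀¹ x^n (-log(1 - x)) dx = H_{n+1}/(n+1)`, so the `n`-th summand integrates
to `H_{n+1}^p/(n+1)^q`. The summands are nonnegative on the cube, hence the interchange of sum
and integral is justified by the convergence of the Euler sum itself, which follows from
`H_n ≤ (1 + ε⁻¹) n^ε`.
-/

open MeasureTheory

open Real Set Finset

lemma hasDerivAt_primitive_pow_mul_neg_log_one_sub (n : ℕ) {x : ℝ} (hx : x ≠ 1) :
    HasDerivAt (fun y : ℝ => (∑ i ∈ range (n + 1), y ^ (i + 1) / (i + 1)
      + (1 - y ^ (n + 1)) * log (1 - y)) / (n + 1)) (x ^ n * -log (1 - x)) x := by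
  have h1x : 1 - x ≠ 0 := sub_ne_zero.2 hx.symm
  have hsum : HasDerivAt (fun y : ℝ => ∑ i ∈ range (n + 1), y ^ (i + 1) / (i + 1))
      (∑ i ∈ range (n + 1), x ^ i) x := by
    refine HasDerivAt.fun_sum fun i _ => ((hasDerivAt_pow (i + 1) x).div_const _).congr_deriv ?_
    field_simp
    push_cast
    ring
  have hlog : HasDerivAt (fun y : ℝ => log (1 - y)) (-1 / (1 - x)) x := by
    simpa using ((hasDerivAt_id x).const_sub 1).log h1x
  refine ((hsum.add (((hasDerivAt_pow (n + 1) x).const_sub 1).mul hlog)).div_const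
    ((n : ℝ) + 1)).congr_deriv ?_
  rw [← geom_sum_mul_neg x (n + 1)]
  field_simp
  push_cast
  ring

-- Continuous also at `y = 1`: there `(1 - y ^ (n + 1)) * log (1 - y)` is a polynomial times
-- `(1 - y) * log (1 - y)`.
lemma continuous_primitive_pow_mul_neg_log_one_sub (n : ℕ) :
    Continuous (fun y : ℝ => (∑ i ∈ range (n + 1), y ^ (i + 1) / (i + 1)
      + (1 - y ^ (n + 1)) * log (1 - y)) / (n + 1)) := by
  simp_rw [← geom_sum_mul_neg _ (n + 1), mul_assoc]
  have : Continuous fun y : ℝ => (1 - y) * log (1 - y) :=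
    continuous_mul_log.comp (continuous_const.sub continuous_id)
  fun_prop

lemma pow_mul_neg_log_one_sub_nonneg (n : ℕ) {x : ℝ} (hx : x ∈ Ioo (0 : ℝ) 1) :
    0 ≤ x ^ n * -log (1 - x) :=
  mul_nonneg (pow_nonneg hx.1.le n)
    (neg_nonneg.2 (log_nonpos (by linarith [hx.2]) (by linarith [hx.1])))

lemma integrableOn_pow_mul_neg_log_one_sub (n : ℕ) :
    IntegrableOn (fun x : ℝ => x ^ n * -log (1 - x)) (Ioo 0 1) :=
  (intervalIntegral.integrableOn_deriv_of_nonneg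
    (continuous_primitive_pow_mul_neg_log_one_sub n).continuousOn
    (fun _ hx => hasDerivAt_primitive_pow_mul_neg_log_one_sub n hx.2.ne)
    (fun _ hx => pow_mul_neg_log_one_sub_nonneg n hx)).mono_set Ioo_subset_Ioc_self

lemma integral_pow_mul_neg_log_one_sub (n : ℕ) :
    ∫ x in Ioo (0 : ℝ) 1, x ^ n * -log (1 - x) = harmonic (n + 1) / (n + 1) := by
  rw [← integral_Ioc_eq_integral_Ioo, ← intervalIntegral.integral_of_le zero_le_one,
    intervalIntegral.integral_eq_sub_of_hasDerivAt_of_le zero_le_one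
      (continuous_primitive_pow_mul_neg_log_one_sub n).continuousOn
      (fun _ hx => hasDerivAt_primitive_pow_mul_neg_log_one_sub n hx.2.ne)
      ((intervalIntegrable_iff_integrableOn_Ioo_of_le zero_le_one).2
        (integrableOn_pow_mul_neg_log_one_sub n))]
  simp [harmonic]

lemma harmonic_le_mul_rpow {ε : ℝ} (hε : 0 < ε) (n : ℕ) :
    (harmonic n : ℝ) ≤ (1 + ε⁻¹) * (n : ℝ) ^ ε := by
  rcases Nat.eq_zero_or_pos n with rfl | hn
  · simp [zero_rpow hε.ne']
  have hpow : 1 ≤ (n : ℝ) ^ ε := one_le_rpow (by exact_mod_cast hn) hε.le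
  calc (harmonic n : ℝ) ≤ 1 + log n := harmonic_le_one_add_log n
    _ ≤ (n : ℝ) ^ ε + (n : ℝ) ^ ε / ε := add_le_add hpow (log_natCast_le_rpow_div n hε)
    _ = (1 + ε⁻¹) * (n : ℝ) ^ ε := by ring

lemma summable_harmonic_pow_div_pow (p : ℕ) {q : ℕ} (hq : 2 ≤ q) :
    Summable fun n : ℕ => (harmonic (n + 1) : ℝ) ^ p / ((n : ℝ) + 1) ^ q := by
  set ε : ℝ := ((p : ℝ) + 1)⁻¹
  have hε : 0 < ε := by positivity
  have hexp : ε * p - 2 < -1 := by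
    have : ε * p < 1 := by
      rw [inv_mul_lt_iff₀ (by positivity)]
      linarith
    linarith
  have hsummable : Summable fun n : ℕ => ((n : ℝ) + 1) ^ (ε * p - 2) := by
    simpa using (summable_nat_add_iff 1).2 (summable_nat_rpow.2 hexp)
  have hH0 (n : ℕ) : (0 : ℝ) ≤ harmonic (n + 1) := by
    exact_mod_cast (harmonic_pos n.succ_ne_zero).le
  refine Summable.of_nonneg_of_le (fun n => by have := hH0 n; positivity) (fun n => ?_)
    (hsummable.mul_left ((1 + ε⁻¹) ^ p))
  have hN : (1 : ℝ) ≤ (n : ℝ) + 1 := by linarith [n.cast_nonneg (α := ℝ)]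
  have hH := harmonic_le_mul_rpow hε (n + 1)
  push_cast at hH
  calc (harmonic (n + 1) : ℝ) ^ p / ((n : ℝ) + 1) ^ q
      ≤ ((1 + ε⁻¹) * ((n : ℝ) + 1) ^ ε) ^ p / ((n : ℝ) + 1) ^ 2 :=
        div_le_div₀ (by positivity) (pow_le_pow_left₀ (hH0 n) hH p) (by positivity)
          (pow_le_pow_right₀ hN hq)
    _ = (1 + ε⁻¹) ^ p * ((n : ℝ) + 1) ^ (ε * p - 2) := by
        rw [mul_pow, rpow_sub (by positivity), rpow_mul_natCast (by positivity)]
        norm_cast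
        ring

lemma setIntegral_univ_pi_prod_eq_pow {ι : Type*} [Fintype ι] (f : ℝ → ℝ) (s : Set ℝ) :
    ∫ x in univ.pi (fun _ : ι => s), ∏ j, f (x j) = (∫ x in s, f x) ^ Fintype.card ι := by
  rw [volume_pi, Measure.restrict_pi_pi, integral_fintype_prod_eq_pow]

lemma integrableOn_univ_pi_prod {ι : Type*} [Fintype ι] {f : ℝ → ℝ} {s : Set ℝ}
    (hf : IntegrableOn f s) :
    IntegrableOn (fun x : ι → ℝ => ∏ j, f (x j)) (univ.pi fun _ => s) := by
  rw [IntegrableOn, volume_pi, Measure.restrict_pi_pi]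
  exact Integrable.fintype_prod (f := fun _ => f) fun _ => hf

lemma setIntegral_cube_prod_pow_mul_neg_log_one_sub (ι : Type*) [Fintype ι] (n : ℕ) :
    ∫ x in univ.pi (fun _ : ι => Ioo (0 : ℝ) 1), ∏ j, x j ^ n * -log (1 - x j)
      = (harmonic (n + 1) / (n + 1)) ^ Fintype.card ι := by
  rw [setIntegral_univ_pi_prod_eq_pow (fun y => y ^ n * -log (1 - y)),
    integral_pow_mul_neg_log_one_sub]

lemma Li_div_self (e : ℤ) {t : ℝ} (ht : t ≠ 0) :
    Li e t / t = ∑' n : ℕ, t ^ n / ((n : ℝ) + 1) ^ e := by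
  rw [Li, tsum_pnat_eq_tsum_succ (f := fun k : ℕ => t ^ k / (k : ℝ) ^ e), ← tsum_div_const]
  congr 1 with n
  push_cast
  field_simp
  ring

lemma Li_prod_mul_prod_log_div_prod {ι : Type*} [Fintype ι] (e : ℤ) {x : ι → ℝ}
    (hx : ∀ j, x j ≠ 0) :
    Li e (∏ j, x j) * (∏ j, log (1 - x j)) / ∏ j, x j
      = (-1) ^ Fintype.card ι *
        ∑' n : ℕ, (∏ j, x j ^ n * -log (1 - x j)) / ((n : ℝ) + 1) ^ e := by
  have hlog : ∏ j, log (1 - x j) = (-1) ^ Fintype.card ι * ∏ j, -log (1 - x j) := by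
    rw [← Finset.card_univ, ← Finset.prod_neg]
    simp
  rw [mul_div_right_comm, Li_div_self e (Finset.prod_ne_zero_iff.2 fun j _ => hx j),
    ← tsum_mul_right, ← tsum_mul_left]
  congr 1 with n
  rw [hlog, Finset.prod_mul_distrib, Finset.prod_pow]
  ring

theorem stmt5_general (p q : ℕ) (hq : 2 ≤ q) :
    ∑' n : ℕ+, (∑ k ∈ Finset.Icc 1 (n : ℕ), (1 : ℝ) / (k : ℝ)) ^ p / ((n : ℕ) : ℝ) ^ q
      = (-1) ^ p *
        ∫ x in (Set.univ.pi fun _ : Fin p => Set.Ioo (0:ℝ) 1),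
          Li ((q : ℤ) - (p : ℤ)) (∏ j, x j) * (∏ j, Real.log (1 - x j)) / ∏ j, x j := by
  set cube := univ.pi fun _ : Fin p => Ioo (0 : ℝ) 1
  have hcube : MeasurableSet cube := MeasurableSet.univ_pi fun _ => measurableSet_Ioo
  set term : ℕ → (Fin p → ℝ) → ℝ :=
    fun n x => (∏ j, x j ^ n * -log (1 - x j)) / ((n : ℝ) + 1) ^ ((q : ℤ) - p)
  have h_int (n : ℕ) : IntegrableOn (term n) cube :=
    (integrableOn_univ_pi_prod (integrableOn_pow_mul_neg_log_one_sub n)).div_const _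
  have h_integral (n : ℕ) :
      ∫ x in cube, term n x = harmonic (n + 1) ^ p / ((n : ℝ) + 1) ^ q := by
    rw [integral_div, setIntegral_cube_prod_pow_mul_neg_log_one_sub, Fintype.card_fin,
      zpow_sub₀ (by positivity), zpow_natCast, zpow_natCast, div_pow]
    field_simp
  have h_norm (n : ℕ) : ∫ x in cube, ‖term n x‖ = ∫ x in cube, term n x :=
    setIntegral_congr_fun hcube fun x hx => norm_of_nonneg (div_nonneg
      (Finset.prod_nonneg fun j _ => pow_mul_neg_log_one_sub_nonneg n (hx j trivial))
      (by positivity))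
  have h_series :
      EqOn (fun x => Li ((q : ℤ) - p) (∏ j, x j) * (∏ j, log (1 - x j)) / ∏ j, x j)
        (fun x => (-1) ^ p * ∑' n, term n x) cube := fun x hx => by
    simpa [term] using Li_prod_mul_prod_log_div_prod ((q : ℤ) - p) fun j => (hx j trivial).1.ne'
  rw [setIntegral_congr_fun hcube h_series, integral_const_mul, ← mul_assoc, ← mul_pow,
    neg_one_mul, neg_neg, one_pow, one_mul, ← integral_tsum_of_summable_integral_norm h_int
      (by simpa only [h_norm, h_integral] using summable_harmonic_pow_div_pow p hq),
    tsum_pnat_eq_tsum_succ (f := fun m => (∑ k ∈ Icc 1 m, (1 : ℝ) / k) ^ p / (m : ℝ) ^ q)]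
  congr 1 with n
  rw [h_integral, harmonic_eq_sum_Icc]
  push_cast
  simp [one_div]

/-- For integers `p ≥ 1` and `q ≥ 2`, the nonlinear Euler sum
`S_{1^p,q} = ∑_{n ≥ 1} H_n^p / n^q` equals `(-1)^p` times the Lebesgue integral over the open
unit cube `(0,1)^p` of `Li_{q-p}(x₁⋯x_p) ∏_j log(1-x_j) / (x₁⋯x_p)`. -/
theorem stmt5 (p q : ℕ) (hp : 1 ≤ p) (hq : 2 ≤ q) :
    ∑' n : ℕ+, (∑ k ∈ Finset.Icc 1 (n : ℕ), (1 : ℝ) / (k : ℝ)) ^ p / ((n : ℕ) : ℝ) ^ q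
      = (-1) ^ p *
        ∫ x in (Set.univ.pi fun _ : Fin p => Set.Ioo (0:ℝ) 1),
          Li ((q : ℤ) - (p : ℤ)) (∏ j, x j) * (∏ j, Real.log (1 - x j)) / ∏ j, x j :=
  stmt5_general p q hq
end

section
/- For all integers q ≥ 2 and m ≥ 0, the integrals J(m,1,q) = ∫₀¹ x^m Li₁(x) Li_q(x) dx satisfy J(m,1,q) = ζ(q)/(m+1) - (1/(m+1))·[m·J₀(m,q) + J₀(m,q-1)] + (1/(m+1))·[m·J(m-1,1,q) + J(m-1,1,q-1) - J(m,1,q-1)], where J₀(m,q) := ∫₀¹ x^m Li_q(x) dx. -/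
open MeasureTheory

/-- The integral `J(m,p,q) = ∫₀¹ x^m Li_p(x) Li_q(x) dx` (with integer exponent `m`). -/
noncomputable def J (m : ℤ) (p q : ℤ) : ℝ := ∫ x in (0:ℝ)..1, x ^ m * Li p x * Li q x

/-- The integral `J₀(m,q) = ∫₀¹ x^m Li_q(x) dx` (with integer exponent `m`). -/
noncomputable def J0 (m : ℤ) (q : ℤ) : ℝ := ∫ x in (0:ℝ)..1, x ^ m * Li q x

/-!
Expanding the polylogarithms and integrating termwise gives
`J₀(m,q) = ∑ₖ 1 / (k^q (m+k+1))` and `J(m,1,q) = ∑ₖ A(m+k+1) / k^q`, where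
`A(c) = ∑ⱼ 1 / (j (j+c))` is `sumInvMulAdd c`. For integral `c`, `c A(c)` is the harmonic
number `H_c`, so `(c+1) A(c+1) = c A(c) + 1/(c+1)`. With `c = m + k` this is an identity between
the `k`-th summands of the six series in the statement, and summing over `k` proves it.
-/

open Set Filter Topology

lemma one_le_pnat_cast (k : ℕ+) : (1 : ℝ) ≤ (k : ℕ) := Nat.one_le_cast.mpr k.pos

lemma pnat_cast_le_pow (k : ℕ+) {q : ℕ} (hq : 1 ≤ q) : ((k : ℕ) : ℝ) ≤ ((k : ℕ) : ℝ) ^ q :=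
  le_self_pow₀ (one_le_pnat_cast k) (by omega)

lemma summable_pnat_one_div_pow {q : ℕ} (hq : 2 ≤ q) :
    Summable fun k : ℕ+ => 1 / ((k : ℕ) : ℝ) ^ q :=
  summable_pnat_iff_summable_nat.mpr (Real.summable_one_div_nat_pow.mpr hq)

lemma hasSum_zetaR {q : ℕ} (hq : 2 ≤ q) :
    HasSum (fun k : ℕ+ => 1 / ((k : ℕ) : ℝ) ^ q) (zetaR q) :=
  (summable_pnat_one_div_pow hq).hasSum

lemma summable_pnat_one_div_mul_sqrt :
    Summable fun k : ℕ+ => 1 / (((k : ℕ) : ℝ) * √((k : ℕ) : ℝ)) := by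
  refine (summable_pnat_iff_summable_nat.mpr
    (Real.summable_one_div_nat_rpow.mpr (by norm_num : (1 : ℝ) < 3 / 2))).congr fun k => ?_
  rw [show (3 / 2 : ℝ) = 1 + 1 / 2 by norm_num, Real.rpow_add (by positivity), Real.rpow_one,
    Real.sqrt_eq_rpow]

lemma summable_one_div_mul_mul_add :
    Summable fun p : ℕ+ × ℕ+ =>
      1 / (((p.1 : ℕ) : ℝ) * ((p.2 : ℕ) : ℝ) * (((p.1 : ℕ) : ℝ) + ((p.2 : ℕ) : ℝ))) := by
  have hbound : ∀ a b : ℝ, 0 < a → 0 < b →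
      1 / (a * b * (a + b)) ≤ 1 / (a * √a) * (1 / (b * √b)) := fun a b ha hb => by
    have hsqrt : √a * √b ≤ a + b := by
      nlinarith [sq_nonneg (√a - √b), Real.sq_sqrt ha.le, Real.sq_sqrt hb.le]
    rw [div_mul_div_comm, one_mul]
    refine one_div_le_one_div_of_le (by positivity) ?_
    calc a * √a * (b * √b) = a * b * (√a * √b) := by ring
      _ ≤ a * b * (a + b) := by gcongr
  refine Summable.of_nonneg_of_le (fun p => by positivity) (fun p => hbound _ _ (by positivity)
    (by positivity)) (summable_pnat_one_div_mul_sqrt.mul_of_nonneg summable_pnat_one_div_mul_sqrt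
      (fun k => by positivity) (fun k => by positivity))

lemma hasSum_sub_succ_of_antitone {g : ℕ → ℝ} (hg : Antitone g) (hlim : Tendsto g atTop (𝓝 0)) :
    HasSum (fun n => g n - g (n + 1)) (g 0) := by
  rw [hasSum_iff_tendsto_nat_of_nonneg (fun n => sub_nonneg.2 (hg n.le_succ))]
  simp_rw [Finset.sum_range_sub']
  simpa using tendsto_const_nhds.sub hlim

noncomputable def sumInvMulAdd (c : ℝ) : ℝ := ∑' j : ℕ+, 1 / (((j : ℕ) : ℝ) * ((j : ℕ) + c))

lemma summable_one_div_mul_add {c : ℝ} (hc : 0 ≤ c) :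
    Summable fun j : ℕ+ => 1 / (((j : ℕ) : ℝ) * ((j : ℕ) + c)) := by
  refine Summable.of_nonneg_of_le (fun j => by positivity) (fun j => ?_)
    (summable_pnat_one_div_pow le_rfl)
  exact one_div_le_one_div_of_le (by positivity) (by rw [sq]; gcongr; linarith)

lemma hasSum_one_div_add_sub_one_div_add_one {c : ℝ} (hc : 0 ≤ c) :
    HasSum (fun j : ℕ+ => 1 / (((j : ℕ) : ℝ) + c) - 1 / ((j : ℕ) + c + 1)) (1 / (c + 1)) := by
  rw [hasSum_pnat_iff_hasSum_succ (f := fun n => 1 / ((n : ℝ) + c) - 1 / (n + c + 1))]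
  have htel := hasSum_sub_succ_of_antitone (g := fun n : ℕ => 1 / ((n : ℝ) + 1 + c))
    (fun a b hab => one_div_le_one_div_of_le (by positivity) (by gcongr))
    (tendsto_const_nhds.div_atTop (tendsto_atTop_add_const_right _ _
      (tendsto_atTop_add_const_right _ _ tendsto_natCast_atTop_atTop)))
  convert htel using 1
  · funext n; push_cast; ring_nf
  · simp [add_comm]

lemma sumInvMulAdd_succ {c : ℝ} (hc : 0 ≤ c) :
    (c + 1) * sumInvMulAdd (c + 1) = c * sumInvMulAdd c + 1 / (c + 1) := by
  have hterm : ∀ j : ℕ+, (c + 1) * (1 / (((j : ℕ) : ℝ) * ((j : ℕ) + (c + 1))))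
      - c * (1 / (((j : ℕ) : ℝ) * ((j : ℕ) + c)))
      = 1 / (((j : ℕ) : ℝ) + c) - 1 / ((j : ℕ) + c + 1) :=
    fun j => by
      have : (0 : ℝ) < (j : ℕ) := by positivity
      field_simp
      ring
  have hdiff := ((summable_one_div_mul_add (by linarith : 0 ≤ c + 1)).hasSum.mul_left (c + 1)).sub
    ((summable_one_div_mul_add hc).hasSum.mul_left c)
  simp only [hterm] at hdiff
  have := (hasSum_one_div_add_sub_one_div_add_one hc).unique hdiff
  unfold sumInvMulAdd
  linarith

lemma hasSum_integral_of_eqOn_tsum_rpow {ι : Type*} [Countable ι] {f : ℝ → ℝ} {c s : ι → ℝ}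
    (hc : ∀ i, 0 ≤ c i) (hs : ∀ i, -1 < s i) (hf : EqOn f (fun x => ∑' i, c i * x ^ s i) (Ioo 0 1))
    (hsum : Summable fun i => c i / (s i + 1)) :
    HasSum (fun i => c i / (s i + 1)) (∫ x in (0:ℝ)..1, f x) := by
  have hterm : ∀ i, ∫ x in Ioo (0:ℝ) 1, c i * x ^ s i = c i / (s i + 1) := fun i => by
    rw [← integral_Ioc_eq_integral_Ioo, ← intervalIntegral.integral_of_le zero_le_one,
      intervalIntegral.integral_const_mul, integral_rpow (Or.inl (hs i))]
    simp [Real.zero_rpow (by linarith [hs i] : s i + 1 ≠ 0)]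
    ring
  have hnorm : ∀ i, ∫ x in Ioo (0:ℝ) 1, ‖c i * x ^ s i‖ = c i / (s i + 1) := fun i => by
    rw [← hterm i]
    refine setIntegral_congr_fun measurableSet_Ioo fun x hx => ?_
    exact Real.norm_of_nonneg (mul_nonneg (hc i) (Real.rpow_nonneg hx.1.le _))
  have hint : ∀ i, IntegrableOn (fun x => c i * x ^ s i) (Ioo 0 1) := fun i =>
    (((intervalIntegral.intervalIntegrable_rpow' (hs i)).const_mul (c i)).1).mono_set
      Ioo_subset_Ioc_self
  rw [intervalIntegral.integral_of_le zero_le_one, integral_Ioc_eq_integral_Ioo,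
    setIntegral_congr_fun measurableSet_Ioo hf,
    ← integral_tsum_of_summable_integral_norm hint (by simpa only [hnorm] using hsum)]
  simpa only [hterm] using hsum.hasSum

lemma hasSum_Li {x : ℝ} (hx0 : 0 ≤ x) (hx1 : x < 1) (n : ℕ) :
    HasSum (fun k : ℕ+ => x ^ (k : ℕ) / ((k : ℕ) : ℝ) ^ n) (Li n x) := by
  have hs : Summable fun k : ℕ+ => x ^ (k : ℕ) / ((k : ℕ) : ℝ) ^ n :=
    Summable.of_nonneg_of_le (fun k => by positivity)
      (fun k => div_le_self (by positivity) (one_le_pow₀ (one_le_pnat_cast k)))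
      (summable_pnat_iff_summable_nat.mpr (summable_geometric_of_lt_one hx0 hx1))
  simpa only [Li, zpow_natCast] using hs.hasSum

lemma zpow_mul_pow_eq_rpow {x : ℝ} (hx : 0 < x) (m : ℤ) (k : ℕ) :
    x ^ m * x ^ k = x ^ ((m : ℝ) + k) := by
  rw [Real.rpow_add hx, Real.rpow_intCast, Real.rpow_natCast]

lemma zpow_mul_Li_eq_tsum {x : ℝ} (hx : x ∈ Ioo 0 1) (m : ℤ) (q : ℕ) :
    x ^ m * Li q x = ∑' k : ℕ+, 1 / ((k : ℕ) : ℝ) ^ q * x ^ ((m : ℝ) + (k : ℕ)) := by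
  rw [← ((hasSum_Li hx.1.le hx.2 q).mul_left (x ^ m)).tsum_eq]
  refine tsum_congr fun k => ?_
  rw [← zpow_mul_pow_eq_rpow hx.1]
  ring

lemma zpow_mul_Li_one_mul_Li_eq_tsum {x : ℝ} (hx : x ∈ Ioo 0 1) (m : ℤ) (q : ℕ) :
    x ^ m * Li 1 x * Li q x = ∑' p : ℕ+ × ℕ+,
      1 / (((p.1 : ℕ) : ℝ) ^ q * (p.2 : ℕ)) * x ^ ((m : ℝ) + (p.1 : ℕ) + (p.2 : ℕ)) := by
  have hLi := hasSum_Li hx.1.le hx.2 q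
  have hLi1 := hasSum_Li hx.1.le hx.2 1
  simp only [Nat.cast_one, pow_one] at hLi1
  rw [mul_assoc, mul_comm (Li 1 x), ← hLi.tsum_eq, ← hLi1.tsum_eq,
    tsum_mul_tsum_of_summable_norm hLi.summable.norm hLi1.summable.norm, ← tsum_mul_left]
  refine tsum_congr fun p => ?_
  rw [show (m : ℝ) + (p.1 : ℕ) + (p.2 : ℕ) = m + ((p.1 + p.2 : ℕ) : ℝ) by push_cast; ring,
    ← zpow_mul_pow_eq_rpow hx.1, pow_add]
  ring

lemma hasSum_J0 {m : ℤ} (hm : -1 ≤ m) {q : ℕ} (hq : 1 ≤ q) :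
    HasSum (fun k : ℕ+ => 1 / (((k : ℕ) : ℝ) ^ q * (m + k + 1))) (J0 m q) := by
  have hm' : (-1 : ℝ) ≤ m := by exact_mod_cast hm
  have hsum : Summable fun k : ℕ+ => 1 / ((k : ℕ) : ℝ) ^ q / ((m + (k : ℕ)) + 1) := by
    refine Summable.of_nonneg_of_le (fun k => div_nonneg (by positivity) (by linarith))
      (fun k => ?_) (summable_pnat_one_div_pow le_rfl)
    rw [div_div, sq]
    exact one_div_le_one_div_of_le (by positivity)
      (mul_le_mul (pnat_cast_le_pow k hq) (by linarith) (by positivity) (by positivity))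
  have h := hasSum_integral_of_eqOn_tsum_rpow (fun k => by positivity)
    (fun k => by linarith [one_le_pnat_cast k]) (fun x hx => zpow_mul_Li_eq_tsum hx m q) hsum
  rw [J0]
  simpa only [div_div] using h

lemma hasSum_J_one {m : ℤ} (hm : -1 ≤ m) {q : ℕ} (hq : 1 ≤ q) :
    HasSum (fun k : ℕ+ => sumInvMulAdd (m + k + 1) / ((k : ℕ) : ℝ) ^ q) (J m 1 q) := by
  have hm' : (-1 : ℝ) ≤ m := by exact_mod_cast hm
  have hsum : Summable fun p : ℕ+ × ℕ+ =>
      1 / (((p.1 : ℕ) : ℝ) ^ q * (p.2 : ℕ)) / ((m + (p.1 : ℕ) + (p.2 : ℕ)) + 1) := by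
    refine Summable.of_nonneg_of_le (fun p => div_nonneg (by positivity) (by linarith))
      (fun p => ?_) summable_one_div_mul_mul_add
    rw [div_div]
    exact one_div_le_one_div_of_le (by positivity)
      (mul_le_mul (mul_le_mul_of_nonneg_right (pnat_cast_le_pow p.1 hq) (by positivity))
        (by linarith) (by positivity) (by positivity))
  have hpair := hasSum_integral_of_eqOn_tsum_rpow (fun p => by positivity)
    (fun p => by linarith [one_le_pnat_cast p.1, one_le_pnat_cast p.2])
    (fun x hx => zpow_mul_Li_one_mul_Li_eq_tsum hx m q) hsum
  rw [J]
  refine hpair.prod_fiberwise fun k => ?_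
  have hk : (0 : ℝ) ≤ m + k + 1 := by linarith [one_le_pnat_cast k]
  refine ((summable_one_div_mul_add hk).hasSum.div_const (((k : ℕ) : ℝ) ^ q)).congr_fun
    fun j => ?_
  have : (0 : ℝ) < m + k + j + 1 := by linarith [one_le_pnat_cast j]
  field_simp
  ring

lemma J_summand_recurrence {m k : ℝ} (hk : 0 < k) (hmk : 0 ≤ m + k) (p : ℕ) :
    (m + 1) * (sumInvMulAdd (m + k + 1) / k ^ (p + 1))
        + (m * (1 / (k ^ (p + 1) * (m + k + 1)))
          + (1 / (k ^ p * (m + k + 1)) + sumInvMulAdd (m + k + 1) / k ^ p))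
      = 1 / k ^ (p + 1) + (m * (sumInvMulAdd (m + k) / k ^ (p + 1))
          + sumInvMulAdd (m + k) / k ^ p) := by
  have hrec := sumInvMulAdd_succ hmk
  have : 0 < m + k + 1 := by linarith
  field_simp at hrec ⊢
  rw [pow_succ]
  linear_combination k ^ p * hrec

/-- For integers `q ≥ 2` and `m ≥ 0`, the integrals `J(m,1,q)` satisfy
`J(m,1,q) = ζ(q)/(m+1) - (1/(m+1))(m J₀(m,q) + J₀(m,q-1))
  + (1/(m+1))(m J(m-1,1,q) + J(m-1,1,q-1) - J(m,1,q-1))`. -/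
theorem stmt11 (m : ℤ) (q : ℕ) (hm : 0 ≤ m) (hq : 2 ≤ q) :
    J m 1 q = zetaR q / ((m : ℝ) + 1)
        - (1 / ((m : ℝ) + 1)) * ((m : ℝ) * J0 m q + J0 m ((q : ℤ) - 1))
        + (1 / ((m : ℝ) + 1)) *
            ((m : ℝ) * J (m - 1) 1 q + J (m - 1) 1 ((q : ℤ) - 1) - J m 1 ((q : ℤ) - 1)) := by
  obtain ⟨p, rfl⟩ : ∃ p, q = p + 1 := ⟨q - 1, by omega⟩
  rw [show ((p + 1 : ℕ) : ℤ) - 1 = p by omega]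
  have hm1 : -1 ≤ m := by omega
  have hp : 1 ≤ p := by omega
  have hp1 : 1 ≤ p + 1 := by omega
  have hJ' : ∀ q : ℕ, 1 ≤ q →
      HasSum (fun k : ℕ+ => sumInvMulAdd (m + k) / ((k : ℕ) : ℝ) ^ q) (J (m - 1) 1 q) :=
    fun q hq => (hasSum_J_one (m := m - 1) (by omega) hq).congr_fun fun k => by push_cast; ring_nf
  have hlhs := ((hasSum_J_one hm1 hp1).mul_left ((m : ℝ) + 1)).add
    (((hasSum_J0 hm1 hp1).mul_left (m : ℝ)).add
      ((hasSum_J0 hm1 hp).add (hasSum_J_one hm1 hp)))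
  have hrhs := (hasSum_zetaR hq).add
    (((hJ' (p + 1) hp1).mul_left (m : ℝ)).add (hJ' p hp))
  have hsum := hlhs.unique (hrhs.congr_fun fun k =>
    J_summand_recurrence (m := m) (k := (k : ℕ)) (by positivity) (by positivity) p)
  field_simp
  linear_combination hsum
end

section
/- The quadratic Euler sum Σ_{n=1}^∞ (H_n / n)² equals 17 ζ(4) / 4, where H_n = Σ_{k=1}^n find 1/k is the n-th harmonic number. -/
open MeasureTheory

/-
Work in `ℝ≥0∞`, where double series can be rearranged freely. Everything rests on the
partial fraction `1/(mn) = (1/(m+n)) (1/m + 1/n)` and the telescoping sum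
`∑_{n ≥ 1} 1/(n(n+m)) = H_m/m`.

Expanding `ζ(2)² = ∑_{m,n} 1/(m²n²)` in three ways (symmetrically through the telescoping sum,
by splitting off the diagonal `m = n`, and along the lines `m + n = N` after squaring the
partial fraction) gives three linear relations between `ζ(2)²`, `ζ(4)`, `A = ∑ H_{n-1}/n³`
and `C = ∑ H^{(2)}_{n-1}/n²`; they force `A = ζ(4)/4` and `C = 3ζ(4)/4`.
Writing `(H_m/m)² = (H_m/m) ∑_n 1/(n(n+m))` and grouping along `m + n = N` once more
expresses `2S + C`, where `S = ∑ (H_n/n)²`, through `T = ∑ H_{n-1}²/n²` and `A`, while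
`H_n = H_{n-1} + 1/n` gives `S = T + 2A + ζ(4)`. Since `S < ∞` (as `H_n ≤ 1 + log n`), this linear system yields
`S = 17ζ(4)/4`.
-/

open Finset Filter Topology
open scoped ENNReal NNReal

theorem ENNReal.inv_mul_inv_eq_inv_add_mul_inv_add_inv {a b : ℝ≥0∞} (ha₀ : a ≠ 0) (ha : a ≠ ∞)
    (hb₀ : b ≠ 0) (hb : b ≠ ∞) : a⁻¹ * b⁻¹ = (a + b)⁻¹ * (a⁻¹ + b⁻¹) := by
  have hsum : a⁻¹ + b⁻¹ = (a + b) * (a⁻¹ * b⁻¹) := by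
    rw [add_mul, ← mul_assoc, ENNReal.mul_inv_cancel ha₀ ha, mul_left_comm,
      ENNReal.mul_inv_cancel hb₀ hb, one_mul, mul_one, add_comm]
  rw [hsum, ← mul_assoc, ENNReal.inv_mul_cancel (by simp [ha₀]) (by simp [ha, hb]), one_mul]

theorem ENNReal.tsum_eq_of_sum_range_add_tendsto_zero {f t : ℕ → ℝ≥0∞} {c : ℝ≥0∞}
    (h : ∀ N, ∑ n ∈ range N, f n + t N = c) (ht : Tendsto t atTop (𝓝 0)) : ∑' n, f n = c := by
  have hlim := (ENNReal.tendsto_nat_tsum f).add ht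
  simp only [h, add_zero] at hlim
  exact tendsto_nhds_unique hlim tendsto_const_nhds

theorem ENNReal.tsum_mul_tsum {α β : Type*} (f : α → ℝ≥0∞) (g : β → ℝ≥0∞) :
    (∑' a, f a) * ∑' b, g b = ∑' a, ∑' b, f a * g b := by
  simp_rw [← ENNReal.tsum_mul_right, ← ENNReal.tsum_mul_left]

theorem ENNReal.tsum_tsum_eq_tsum_sum_antidiagonal (f : ℕ → ℕ → ℝ≥0∞) :
    ∑' m, ∑' n, f m n = ∑' N, ∑ p ∈ antidiagonal N, f p.1 p.2 := by
  rw [← ENNReal.tsum_prod, ← Finset.HasAntidiagonal.sigmaAntidiagonalEquivProd.tsum_eq,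
    ENNReal.tsum_sigma']
  simp only [tsum_fintype]
  exact tsum_congr fun N => Finset.sum_attach (antidiagonal N) fun p => f p.1 p.2

theorem Finset.sq_sum_range {R : Type*} [CommSemiring R] (f : ℕ → R) (n : ℕ) :
    (∑ k ∈ range n, f k) ^ 2 = ∑ k ∈ range n, f k * (2 * ∑ j ∈ range k, f j + f k) := by
  induction n with
  | zero => simp
  | succ n ih => rw [sum_range_succ, sum_range_succ, ← ih]; ring

theorem ENNReal.tsum_sq (f : ℕ → ℝ≥0∞) :
    (∑' n, f n) ^ 2 = ∑' n, f n * (2 * ∑ j ∈ range n, f j + f n) := by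
  refine (HasSum.tsum_eq ?_).symm
  rw [ENNReal.hasSum_iff_tendsto_nat]
  simp_rw [← Finset.sq_sum_range]
  exact ((ENNReal.continuous_pow 2).tendsto _).comp (ENNReal.tendsto_nat_tsum f)

theorem Finset.Nat.sum_antidiagonal_add {R : Type*} [CommSemiring R] (f : ℕ → R) (N : ℕ) :
    ∑ p ∈ antidiagonal N, (f p.1 + f p.2) = 2 * ∑ k ∈ range (N + 1), f k := by
  have hswap : ∑ p ∈ antidiagonal N, f p.2 = ∑ p ∈ antidiagonal N, f p.1 :=
    Finset.Nat.sum_antidiagonal_swap (f := fun p => f p.1)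
  rw [sum_add_distrib, hswap, Finset.Nat.sum_antidiagonal_eq_sum_range_succ_mk, two_mul]

theorem tsum_succ_eq_tsum_of_eq_zero {M : Type*} [AddCommMonoid M] [TopologicalSpace M]
    {f : ℕ → M} (hf : f 0 = 0) : ∑' n, f (n + 1) = ∑' n, f n :=
  tsum_pnat_eq_tsum_succ.symm.trans (tsum_pnat_eq_tsum_of_eq_zero hf)

theorem summable_harmonic_div_sq : Summable fun n : ℕ => ((harmonic n : ℝ) / n) ^ 2 := by
  refine Summable.of_nonneg_of_le (fun n => sq_nonneg _) (fun n => ?_)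
    ((Real.summable_nat_rpow_inv.2 (by norm_num : (1 : ℝ) < 3 / 2)).mul_left 25)
  rcases Nat.eq_zero_or_pos n with rfl | hn
  · simp
  have hx : (1 : ℝ) ≤ n := by exact_mod_cast hn
  set t := (n : ℝ) ^ (1 / 4 : ℝ) with ht_def
  have ht : 1 ≤ t := Real.one_le_rpow hx (by norm_num)
  have hxt : (n : ℝ) = t ^ 4 := by
    rw [ht_def, ← Real.rpow_natCast, ← Real.rpow_mul (by linarith)]; norm_num
  have hx32 : (n : ℝ) ^ (3 / 2 : ℝ) = t ^ 6 := by
    rw [ht_def, ← Real.rpow_natCast, ← Real.rpow_mul (by linarith)]; norm_num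
  have hH : (harmonic n : ℝ) ≤ 5 * t := by
    have hlog := Real.log_le_rpow_div (x := n) (by linarith) (ε := 1 / 4) (by norm_num)
    have hharm := harmonic_le_one_add_log n
    rw [← ht_def] at hlog
    linarith
  have hH0 : (0 : ℝ) ≤ harmonic n := by exact_mod_cast (harmonic_pos hn.ne').le
  have hbound : 25 * (t ^ 6)⁻¹ * t ^ (4 * 2) = (5 * t) ^ 2 := by field_simp; ring
  rw [hx32, hxt, div_pow, ← pow_mul, div_le_iff₀ (by positivity), hbound]
  exact pow_le_pow_left₀ hH0 hH 2

namespace QuadraticEulerSum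

/-- `recip n = 1 / (n + 1)`: in this namespace an index `n : ℕ` stands for the positive
integer `n + 1`, so that `harm n = H_n`, `harm₂ n = H_n^{(2)}` and `∑' n, recip n ^ 4 = ζ(4)`. -/
noncomputable def recip (n : ℕ) : ℝ≥0∞ := ((n + 1 : ℕ) : ℝ≥0∞)⁻¹

noncomputable def harm (n : ℕ) : ℝ≥0∞ := ∑ k ∈ range n, recip k

noncomputable def harm₂ (n : ℕ) : ℝ≥0∞ := ∑ k ∈ range n, recip k ^ 2

lemma harm_succ (n : ℕ) : harm (n + 1) = harm n + recip n := sum_range_succ _ _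

lemma harm₂_succ (n : ℕ) : harm₂ (n + 1) = harm₂ n + recip n ^ 2 := sum_range_succ _ _

lemma recip_ne_top (n : ℕ) : recip n ≠ ∞ := ENNReal.inv_ne_top.2 (by simp)

lemma harm_ne_top (n : ℕ) : harm n ≠ ∞ := ENNReal.sum_ne_top.2 fun k _ => recip_ne_top k

lemma recip_mul_recip (m n : ℕ) :
    recip m * recip n = recip (m + n + 1) * (recip m + recip n) := by
  rw [recip, recip, recip,
    ENNReal.inv_mul_inv_eq_inv_add_mul_inv_add_inv (by simp) (by simp) (by simp) (by simp)]
  congr 2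
  push_cast
  ring

lemma tendsto_recip_atTop : Tendsto recip atTop (𝓝 0) :=
  ENNReal.tendsto_inv_nat_nhds_zero.comp (tendsto_add_atTop_nat 1)

lemma tsum_recip_mul_recip_add (m : ℕ) :
    ∑' n, recip n * recip (n + m + 1) = harm (m + 1) * recip m := by
  -- `(m + 1) ∑_{n < N} 1/((n+1)(n+m+2)) = H_{m+1} - ∑_{i ≤ m} 1/(N+i+1)`
  refine ENNReal.tsum_eq_of_sum_range_add_tendsto_zero
    (t := fun N => recip m * ∑ i ∈ range (m + 1), recip (N + i)) (fun N => ?_) ?_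
  · induction N with
    | zero => simp [harm, mul_comm]
    | succ N ih =>
      rw [← ih, sum_range_succ, sum_range_succ, sum_range_succ' (fun i => recip (N + i))]
      have hpf :
          recip N * recip (N + m + 1) + recip m * recip (N + m + 1) = recip m * recip N := by
        rw [recip_mul_recip m N, add_comm m N]; ring
      simp only [add_zero, add_right_comm N 1, add_assoc N] at hpf ⊢
      rw [mul_add, mul_add, ← hpf]
      ring
  · have hsum : Tendsto (fun N => ∑ i ∈ range (m + 1), recip (N + i)) atTop (𝓝 0) := by
      simpa using tendsto_finsetSum (range (m + 1)) fun i _ =>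
        tendsto_recip_atTop.comp (tendsto_add_atTop_nat i)
    simpa using ENNReal.Tendsto.const_mul hsum (Or.inr (recip_ne_top m))

lemma sum_antidiagonal_recip_mul_recip (N : ℕ) :
    ∑ p ∈ antidiagonal N, recip p.1 * recip p.2 = 2 * harm (N + 1) * recip (N + 1) := by
  rw [sum_congr rfl fun p hp => by rw [recip_mul_recip, mem_antidiagonal.1 hp], ← mul_sum,
    Finset.Nat.sum_antidiagonal_add, harm]
  ring

lemma sum_antidiagonal_recip_add_sq (N : ℕ) :
    ∑ p ∈ antidiagonal N, (recip p.1 + recip p.2) ^ 2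
      = 2 * harm₂ (N + 1) + 4 * harm (N + 1) * recip (N + 1) := by
  have hsq (p : ℕ × ℕ) : (recip p.1 + recip p.2) ^ 2
      = (recip p.1 ^ 2 + recip p.2 ^ 2) + 2 * (recip p.1 * recip p.2) := by ring
  rw [sum_congr rfl fun p _ => hsq p, sum_add_distrib,
    Finset.Nat.sum_antidiagonal_add fun k => recip k ^ 2, ← mul_sum,
    sum_antidiagonal_recip_mul_recip, harm₂]
  ring

lemma two_mul_sum_range_harm_succ_mul_recip (n : ℕ) :
    2 * ∑ k ∈ range n, harm (k + 1) * recip k = harm n ^ 2 + harm₂ n := by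
  induction n with
  | zero => simp [harm, harm₂]
  | succ n ih => rw [sum_range_succ, mul_add, ih, harm_succ, harm₂_succ]; ring

lemma sum_antidiagonal_harm_succ_mul_recip_add_harm₂ (N : ℕ) :
    ∑ p ∈ antidiagonal N, harm (p.1 + 1) * recip p.2 + harm₂ (N + 1)
      = harm (N + 1) ^ 2 + 2 * harm (N + 1) * recip (N + 1) := by
  induction N with
  | zero =>
    have h00 := recip_mul_recip 0 0
    simp only [zero_add] at h00
    simp only [HasAntidiagonal.antidiagonal_zero, harm, harm₂, sum_singleton, zero_add, range_one,
      h00, sq]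
    ring
  | succ N ih =>
    have hstep : ∑ p ∈ antidiagonal (N + 1), harm (p.1 + 1) * recip p.2
        = ∑ p ∈ antidiagonal N, harm (p.1 + 1) * recip p.2
          + ∑ p ∈ antidiagonal (N + 1), recip p.1 * recip p.2 := by
      rw [Finset.Nat.sum_antidiagonal_succ, Finset.Nat.sum_antidiagonal_succ]
      simp only [harm_succ (_ + 1), add_mul, sum_add_distrib]
      simp only [harm, zero_add, range_one, sum_singleton]
      ring
    rw [hstep, sum_antidiagonal_recip_mul_recip, harm₂_succ (N + 1),
      show ∀ a b c d : ℝ≥0∞, a + b + (c + d) = (a + c) + b + d from fun _ _ _ _ => by ring, ih,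
      harm_succ (N + 1)]
    ring

lemma tsum_tsum_recip_add_sq_mul (g : ℕ → ℕ → ℝ≥0∞) :
    ∑' m, ∑' n, recip (m + n + 1) ^ 2 * g m n
      = ∑' N, recip (N + 1) ^ 2 * ∑ p ∈ antidiagonal N, g p.1 p.2 := by
  rw [ENNReal.tsum_tsum_eq_tsum_sum_antidiagonal]
  refine tsum_congr fun N => ?_
  rw [mul_sum]
  exact sum_congr rfl fun p hp => by rw [mem_antidiagonal.1 hp]

lemma sq_tsum_recip_sq_eq_two_mul_tsum_harm_succ :
    (∑' n, recip n ^ 2) ^ 2 = 2 * ∑' n, harm (n + 1) * recip n ^ 3 := by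
  have hterm (m n : ℕ) : recip m ^ 2 * recip n ^ 2
      = recip m ^ 2 * (recip n * recip (n + m + 1))
        + recip n ^ 2 * (recip m * recip (m + n + 1)) := by
    calc _ = recip m * recip n * (recip m * recip n) := by ring
      _ = recip m * recip n * (recip (m + n + 1) * (recip m + recip n)) := by
        rw [← recip_mul_recip]
      _ = _ := by rw [add_comm n m]; ring
  rw [sq, ENNReal.tsum_mul_tsum]
  simp_rw [hterm, ENNReal.tsum_add]
  rw [ENNReal.tsum_comm (f := fun m n => recip n ^ 2 * (recip m * recip (m + n + 1)))]
  simp_rw [ENNReal.tsum_mul_left, tsum_recip_mul_recip_add, ← two_mul]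
  congr 1
  exact tsum_congr fun n => by ring

lemma sq_tsum_recip_sq_eq_two_mul_tsum_harm₂_add :
    (∑' n, recip n ^ 2) ^ 2 = 2 * ∑' n, harm₂ n * recip n ^ 2 + ∑' n, recip n ^ 4 := by
  rw [ENNReal.tsum_sq, ← ENNReal.tsum_mul_left, ← ENNReal.tsum_add]
  exact tsum_congr fun n => by simp only [harm₂]; ring

lemma sq_tsum_recip_sq_eq_two_mul_tsum_harm₂_add_four_mul :
    (∑' n, recip n ^ 2) ^ 2
      = 2 * ∑' n, harm₂ n * recip n ^ 2 + 4 * ∑' n, harm n * recip n ^ 3 := by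
  have hterm (m n : ℕ) :
      recip m ^ 2 * recip n ^ 2 = recip (m + n + 1) ^ 2 * (recip m + recip n) ^ 2 := by
    rw [← mul_pow, ← mul_pow, recip_mul_recip]
  rw [sq, ENNReal.tsum_mul_tsum]
  simp_rw [hterm]
  rw [tsum_tsum_recip_add_sq_mul fun m n => (recip m + recip n) ^ 2,
    ← tsum_succ_eq_tsum_of_eq_zero (f := fun n => harm₂ n * recip n ^ 2) (by simp [harm₂]),
    ← tsum_succ_eq_tsum_of_eq_zero (f := fun n => harm n * recip n ^ 3) (by simp [harm]),
    ← ENNReal.tsum_mul_left, ← ENNReal.tsum_mul_left, ← ENNReal.tsum_add]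
  exact tsum_congr fun N => by rw [sum_antidiagonal_recip_add_sq]; ring

lemma tsum_harm_succ_mul_recip_pow_three :
    ∑' n, harm (n + 1) * recip n ^ 3 = ∑' n, harm n * recip n ^ 3 + ∑' n, recip n ^ 4 := by
  rw [← ENNReal.tsum_add]
  exact tsum_congr fun n => by rw [harm_succ]; ring

lemma tsum_sq_harm_succ_mul_recip_eq_add :
    ∑' n, (harm (n + 1) * recip n) ^ 2
      = ∑' n, harm n ^ 2 * recip n ^ 2 + 2 * ∑' n, harm n * recip n ^ 3 + ∑' n, recip n ^ 4 := by
  rw [← ENNReal.tsum_mul_left, ← ENNReal.tsum_add, ← ENNReal.tsum_add]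
  exact tsum_congr fun n => by rw [harm_succ]; ring

lemma tsum_sq_harm_succ_mul_recip_eq_tsum_antidiagonal :
    ∑' n, (harm (n + 1) * recip n) ^ 2
      = ∑' N, recip (N + 1) ^ 2
          * ∑ p ∈ antidiagonal N, harm (p.1 + 1) * (recip p.1 + recip p.2) := by
  have hterm (m n : ℕ) : harm (m + 1) * recip m * (recip n * recip (n + m + 1))
      = recip (m + n + 1) ^ 2 * (harm (m + 1) * (recip m + recip n)) := by
    calc _ = harm (m + 1) * recip (m + n + 1) * (recip m * recip n) := by rw [add_comm n m]; ring
      _ = _ := by rw [recip_mul_recip]; ring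
  rw [← tsum_tsum_recip_add_sq_mul fun m n => harm (m + 1) * (recip m + recip n)]
  refine tsum_congr fun m => ?_
  simp_rw [← hterm, ENNReal.tsum_mul_left, tsum_recip_mul_recip_add]
  ring

lemma two_mul_tsum_sq_harm_succ_mul_recip_add :
    2 * ∑' n, (harm (n + 1) * recip n) ^ 2 + ∑' n, harm₂ n * recip n ^ 2
      = 3 * ∑' n, harm n ^ 2 * recip n ^ 2 + 4 * ∑' n, harm n * recip n ^ 3 := by
  rw [tsum_sq_harm_succ_mul_recip_eq_tsum_antidiagonal,
    ← tsum_succ_eq_tsum_of_eq_zero (f := fun n => harm₂ n * recip n ^ 2) (by simp [harm₂]),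
    ← tsum_succ_eq_tsum_of_eq_zero (f := fun n => harm n ^ 2 * recip n ^ 2) (by simp [harm]),
    ← tsum_succ_eq_tsum_of_eq_zero (f := fun n => harm n * recip n ^ 3) (by simp [harm]),
    ← ENNReal.tsum_mul_left, ← ENNReal.tsum_mul_left, ← ENNReal.tsum_mul_left,
    ← ENNReal.tsum_add, ← ENNReal.tsum_add]
  refine tsum_congr fun N => ?_
  have hP := two_mul_sum_range_harm_succ_mul_recip (N + 1)
  have hD := sum_antidiagonal_harm_succ_mul_recip_add_harm₂ N
  simp only [mul_add, sum_add_distrib]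
  rw [Finset.Nat.sum_antidiagonal_eq_sum_range_succ_mk (fun p => harm (p.1 + 1) * recip p.1)]
  set P := ∑ k ∈ range (N + 1), harm (k + 1) * recip k
  set D := ∑ p ∈ antidiagonal N, harm (p.1 + 1) * recip p.2
  calc _ = recip (N + 1) ^ 2 * (2 * P + 2 * D + harm₂ (N + 1)) := by ring
    _ = recip (N + 1) ^ 2 * (harm (N + 1) ^ 2 + 2 * (D + harm₂ (N + 1))) := by rw [hP]; ring
    _ = _ := by rw [hD]; ring

lemma toReal_recip (n : ℕ) : (recip n).toReal = ((n : ℝ) + 1)⁻¹ := by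
  rw [recip, ENNReal.toReal_inv, ENNReal.toReal_natCast]
  push_cast
  rfl

lemma toReal_harm (n : ℕ) : (harm n).toReal = harmonic n := by
  rw [harm, ENNReal.toReal_sum fun k _ => recip_ne_top k]
  simp [harmonic, toReal_recip]

lemma tsum_sq_harm_succ_mul_recip_ne_top : ∑' n, (harm (n + 1) * recip n) ^ 2 ≠ ∞ := by
  have hterm (n : ℕ) : (harm (n + 1) * recip n) ^ 2
      = ENNReal.ofReal (((harmonic (n + 1) : ℝ) / ((n + 1 : ℕ) : ℝ)) ^ 2) := by
    rw [← ENNReal.ofReal_toReal (ENNReal.pow_ne_top (ENNReal.mul_ne_top (harm_ne_top _)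
      (recip_ne_top n))), ENNReal.toReal_pow, ENNReal.toReal_mul, toReal_harm, toReal_recip]
    congr 2
    push_cast
    ring
  simp_rw [hterm]
  exact ((summable_nat_add_iff 1).2 summable_harmonic_div_sq).tsum_ofReal_ne_top

theorem four_mul_tsum_sq_harm_succ_mul_recip :
    4 * ∑' n, (harm (n + 1) * recip n) ^ 2 = 17 * ∑' n, recip n ^ 4 := by
  have hS := tsum_sq_harm_succ_mul_recip_ne_top
  have h3 := two_mul_tsum_sq_harm_succ_mul_recip_add
  have h4 := tsum_sq_harm_succ_mul_recip_eq_add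
  have h5 := sq_tsum_recip_sq_eq_two_mul_tsum_harm_succ
  rw [tsum_harm_succ_mul_recip_pow_three] at h5
  have h6 := sq_tsum_recip_sq_eq_two_mul_tsum_harm₂_add
  have h7 := sq_tsum_recip_sq_eq_two_mul_tsum_harm₂_add_four_mul
  generalize ∑' n, (harm (n + 1) * recip n) ^ 2 = S at *
  generalize ∑' n, harm n ^ 2 * recip n ^ 2 = s at *
  generalize ∑' n, harm n * recip n ^ 3 = a at *
  generalize ∑' n, harm₂ n * recip n ^ 2 = c at *
  generalize ∑' n, recip n ^ 4 = z at *
  generalize (∑' n, recip n ^ 2) ^ 2 = w at *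
  rw [h4] at hS
  obtain ⟨⟨hs, ha⟩, hz⟩ : (s ≠ ∞ ∧ a ≠ ∞) ∧ z ≠ ∞ := by simpa [ENNReal.mul_eq_top] using hS
  have hc : c ≠ ∞ := by
    have : 3 * s + 4 * a ≠ ∞ := by simp [ENNReal.mul_eq_top, hs, ha]
    exact (ENNReal.add_ne_top.1 (h3 ▸ this)).2
  have hw : w ≠ ∞ := by rw [h6]; simp [ENNReal.mul_eq_top, hc, hz]
  subst h4
  lift s to ℝ≥0 using hs
  lift a to ℝ≥0 using ha
  lift c to ℝ≥0 using hc
  lift z to ℝ≥0 using hz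
  lift w to ℝ≥0 using hw
  norm_cast at h3 h5 h6 h7 ⊢
  rw [← NNReal.coe_inj] at h3 h5 h6 h7 ⊢
  push_cast at h3 h5 h6 h7 ⊢
  linarith

lemma toReal_tsum_sq_harm_succ_mul_recip :
    (∑' n, (harm (n + 1) * recip n) ^ 2).toReal
      = ∑' n : ℕ+, ((∑ k ∈ Icc 1 (n : ℕ), (1 : ℝ) / k) / (n : ℕ)) ^ 2 := by
  rw [ENNReal.tsum_toReal_eq fun n => ENNReal.pow_ne_top (ENNReal.mul_ne_top (harm_ne_top _)
      (recip_ne_top n)),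
    tsum_pnat_eq_tsum_succ (f := fun n => ((∑ k ∈ Icc 1 n, (1 : ℝ) / k) / n) ^ 2)]
  refine tsum_congr fun n => ?_
  rw [ENNReal.toReal_pow, ENNReal.toReal_mul, toReal_harm, toReal_recip, harmonic_eq_sum_Icc]
  push_cast
  simp [div_eq_mul_inv]

lemma toReal_tsum_recip_pow_four : (∑' n, recip n ^ 4).toReal = zetaR 4 := by
  rw [ENNReal.tsum_toReal_eq fun n => ENNReal.pow_ne_top (recip_ne_top n), zetaR,
    tsum_pnat_eq_tsum_succ (f := fun k => 1 / (k : ℝ) ^ 4)]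
  refine tsum_congr fun n => ?_
  simp [toReal_recip]

end QuadraticEulerSum

/-- The quadratic Euler sum `∑_{n ≥ 1} (H_n/n)²` equals `17ζ(4)/4`,
where `H_n = ∑_{k=1}^n 1/k`. -/
theorem stmt17 :
    ∑' n : ℕ+, ((∑ k ∈ Finset.Icc 1 (n : ℕ), (1 : ℝ) / (k : ℝ)) / ((n : ℕ) : ℝ)) ^ 2
      = 17 * zetaR 4 / 4 := by
  have key := congrArg ENNReal.toReal QuadraticEulerSum.four_mul_tsum_sq_harm_succ_mul_recip
  rw [ENNReal.toReal_mul, ENNReal.toReal_mul,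
    QuadraticEulerSum.toReal_tsum_sq_harm_succ_mul_recip,
    QuadraticEulerSum.toReal_tsum_recip_pow_four, ENNReal.toReal_ofNat, ENNReal.toReal_ofNat] at key
  linarith
end

section
/- For all integers r ≥ 1 and q ≥ 3, the linear Euler sum S_{r,q} = Σ_{n=1}^∞ H_n^{(r)}/n^q satisfies 0 ≤ S_{r,q} - ζ(q) ≤ (ζ(q-1) - ζ(q)) / 2^r. -/
open MeasureTheory

private lemma summable_pnat_pow (p : ℕ) (hp : 2 ≤ p) :
    Summable (fun n : ℕ+ => 1 / ((n : ℕ) : ℝ) ^ p) := by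
  have h : Summable (fun n : ℕ => 1 / (n : ℝ) ^ p) :=
    (Real.summable_one_div_nat_pow).mpr hp
  exact h.comp_injective (fun a b hab => PNat.coe_injective hab)

private lemma icc_split (n : ℕ) (hn : 1 ≤ n) :
    Finset.Icc 1 n = insert 1 (Finset.Icc 2 n) := by
  ext x; simp [Finset.mem_Icc, Finset.mem_insert]; omega

private lemma H_le (r n : ℕ) (hr : 1 ≤ r) (hn : 1 ≤ n) :
    (∑ k ∈ Finset.Icc 1 n, (1 : ℝ) / (k : ℝ) ^ r) ≤ 1 + ((n : ℝ) - 1) / 2 ^ r := by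
  rw [icc_split n hn, Finset.sum_insert (by simp)]
  have h2 : (∑ k ∈ Finset.Icc 2 n, (1 : ℝ) / (k : ℝ) ^ r)
      ≤ ∑ k ∈ Finset.Icc 2 n, (1 : ℝ) / 2 ^ r := by
    apply Finset.sum_le_sum
    intro k hk
    have hk2 : 2 ≤ k := (Finset.mem_Icc.mp hk).1
    apply one_div_le_one_div_of_le (by positivity)
    exact_mod_cast Nat.pow_le_pow_left hk2 r
  have h3 : (∑ k ∈ Finset.Icc 2 n, (1 : ℝ) / 2 ^ r) = ((n : ℝ) - 1) / 2 ^ r := by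
    rw [Finset.sum_const, Nat.card_Icc]
    have : (n + 1 - 2 : ℕ) = n - 1 := by omega
    rw [this, nsmul_eq_mul, Nat.cast_sub hn]
    ring
  simp only [Nat.cast_one, one_pow, div_one]
  linarith [h2, h3.le, h3.ge]

private lemma H_ge (r n : ℕ) (hn : 1 ≤ n) :
    (1 : ℝ) ≤ ∑ k ∈ Finset.Icc 1 n, (1 : ℝ) / (k : ℝ) ^ r := by
  rw [icc_split n hn, Finset.sum_insert (by simp)]
  have : (0 : ℝ) ≤ ∑ k ∈ Finset.Icc 2 n, (1 : ℝ) / (k : ℝ) ^ r :=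
    Finset.sum_nonneg fun k _ => by positivity
  simp only [Nat.cast_one, one_pow, div_one]
  linarith

/-- For integers `r ≥ 1` and `q ≥ 3`, the linear Euler sum
`S_{r,q} = ∑_{n ≥ 1} H_n^{(r)}/n^q` satisfies `0 ≤ S_{r,q} - ζ(q) ≤ (ζ(q-1) - ζ(q))/2^r`. -/
theorem stmt18 (r q : ℕ) (hr : 1 ≤ r) (hq : 3 ≤ q) :
    0 ≤ (∑' n : ℕ+, (∑ k ∈ Finset.Icc 1 (n : ℕ), (1 : ℝ) / (k : ℝ) ^ r) / ((n : ℕ) : ℝ) ^ q)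
          - zetaR q
      ∧ (∑' n : ℕ+, (∑ k ∈ Finset.Icc 1 (n : ℕ), (1 : ℝ) / (k : ℝ) ^ r) / ((n : ℕ) : ℝ) ^ q)
          - zetaR q ≤ (zetaR (q - 1) - zetaR q) / 2 ^ r := by
  have hq2 : 2 ≤ q := by omega
  have hq1 : 2 ≤ q - 1 := by omega
  set a : ℕ+ → ℝ := fun n =>
    (∑ k ∈ Finset.Icc 1 (n : ℕ), (1 : ℝ) / (k : ℝ) ^ r) / ((n : ℕ) : ℝ) ^ q with ha
  set b : ℕ+ → ℝ := fun n => 1 / ((n : ℕ) : ℝ) ^ q with hbdef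
  set b' : ℕ+ → ℝ := fun n => 1 / ((n : ℕ) : ℝ) ^ (q - 1) with hb'def
  have hb : Summable b := summable_pnat_pow q hq2
  have hb' : Summable b' := summable_pnat_pow (q - 1) hq1
  -- key identity: n / n^q = 1/n^{q-1}
  have hpow : ∀ n : ℕ+, ((n : ℕ) : ℝ) ^ q = ((n : ℕ) : ℝ) ^ (q - 1) * ((n : ℕ) : ℝ) := by
    intro n
    rw [← pow_succ]
    congr 1
    omega
  have hnpos : ∀ n : ℕ+, (0 : ℝ) < ((n : ℕ) : ℝ) := fun n => by
    exact_mod_cast n.pos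
  -- termwise upper bound
  have hterm : ∀ n : ℕ+, a n - b n ≤ (b' n - b n) / 2 ^ r := by
    intro n
    have hn1 : 1 ≤ (n : ℕ) := n.one_le
    have hnp := hnpos n
    have hle := H_le r (n : ℕ) hr hn1
    have hpq : (0 : ℝ) < ((n : ℕ) : ℝ) ^ q := by positivity
    have key : b' n - b n = (((n : ℕ) : ℝ) - 1) / ((n : ℕ) : ℝ) ^ q := by
      simp only [hb'def, hbdef]
      rw [hpow n]
      field_simp
    rw [key]
    have : a n - b n ≤ ((((n : ℕ) : ℝ) - 1) / 2 ^ r) / ((n : ℕ) : ℝ) ^ q := by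
      simp only [ha, hbdef]
      rw [div_sub_div_same, div_le_div_iff₀ hpq hpq]
      have h2 : (0 : ℝ) < ((n : ℕ) : ℝ) ^ q := hpq
      nlinarith [hle, hpq]
    calc a n - b n ≤ ((((n : ℕ) : ℝ) - 1) / 2 ^ r) / ((n : ℕ) : ℝ) ^ q := this
      _ = (((n : ℕ) : ℝ) - 1) / ((n : ℕ) : ℝ) ^ q / 2 ^ r := by ring
  -- termwise nonneg
  have htermnn : ∀ n : ℕ+, 0 ≤ a n - b n := by
    intro n
    have hn1 : 1 ≤ (n : ℕ) := n.one_le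
    have hge := H_ge r (n : ℕ) hn1
    have hpq : (0 : ℝ) < ((n : ℕ) : ℝ) ^ q := by positivity
    simp only [ha, hbdef]
    rw [div_sub_div_same]
    apply div_nonneg _ hpq.le
    linarith
  -- summability of a
  have hsa : Summable a := by
    apply Summable.of_nonneg_of_le (fun n => ?_) (fun n => ?_) hb'
    · have hge := H_ge r (n : ℕ) n.one_le
      have hpq : (0 : ℝ) ≤ ((n : ℕ) : ℝ) ^ q := by positivity
      exact div_nonneg (by linarith) hpq
    · -- a n ≤ 1/n^{q-1}
      have hle := H_le r (n : ℕ) hr n.one_le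
      have hnp := hnpos n
      have h2r : (1 : ℝ) ≤ 2 ^ r := one_le_pow₀ (by norm_num)
      have h1n : (1 : ℝ) ≤ ((n : ℕ) : ℝ) := by exact_mod_cast n.one_le
      have hH : (∑ k ∈ Finset.Icc 1 (n : ℕ), (1 : ℝ) / (k : ℝ) ^ r) ≤ ((n : ℕ) : ℝ) := by
        have : ((n : ℕ) : ℝ) - 1 ≥ 0 := by linarith
        have hdiv : (((n : ℕ) : ℝ) - 1) / 2 ^ r ≤ ((n : ℕ) : ℝ) - 1 := by
          rw [div_le_iff₀ (by positivity)]
          nlinarith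
        linarith
      simp only [ha, hb'def]
      rw [hpow n, div_le_div_iff₀ (by positivity) (by positivity)]
      calc (∑ k ∈ Finset.Icc 1 (n : ℕ), (1 : ℝ) / (k : ℝ) ^ r) * ((n : ℕ) : ℝ) ^ (q - 1)
          ≤ ((n : ℕ) : ℝ) * ((n : ℕ) : ℝ) ^ (q - 1) := by
            apply mul_le_mul_of_nonneg_right hH (by positivity)
        _ = 1 * (((n : ℕ) : ℝ) ^ (q - 1) * ((n : ℕ) : ℝ)) := by ring
  have hsub : (∑' n : ℕ+, a n) - zetaR q = ∑' n : ℕ+, (a n - b n) := by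
    rw [Summable.tsum_sub hsa hb]
    rfl
  constructor
  · rw [hsub]
    exact tsum_nonneg htermnn
  · rw [hsub]
    have hrhs : Summable (fun n : ℕ+ => (b' n - b n) / 2 ^ r) := (hb'.sub hb).div_const _
    calc (∑' n : ℕ+, (a n - b n)) ≤ ∑' n : ℕ+, (b' n - b n) / 2 ^ r :=
          Summable.tsum_le_tsum hterm ((hsa.sub hb)) hrhs
      _ = (∑' n : ℕ+, (b' n - b n)) / 2 ^ r := tsum_div_const
      _ = (zetaR (q - 1) - zetaR q) / 2 ^ r := by
          rw [Summable.tsum_sub hb' hb]; rfl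
end
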